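/- arXiv:2509.11329 — 6 statements merged into one kernel-verified Lean document; each statement's English description precedes it below -/
import Mathlib

section
/- Let Ω ⊂ ℝⁿ be a bounded domain and let u ∈ C(Ω̄). Suppose there exist constants ε₀ > 0, C₁ > 0, C₂ > 0 and α ∈ (0,1) such that: (1) |u(x) − u(y)| ≤ C₁|x − y|^α for all x ∈ Ω and y ∈ ∂Ω; (2) for every ε ∈ (0, ε₀), |û_ε(x) − u(x)| ≤ C₂ ε^α for all x ∈ Ω_ε, where û_ε denotes the ball average of u. Then there exists a constant C > 0, depending only on ε₀, C₁, C₂, n, diam(Ω) and α, such that |u(x) − u(y)| ≤ C|x − y|^α for all x, y ∈ Ω. -/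
/-!
Hölder bounds are propagated from large scales down to small ones. At scales `s ≥ ε₀ / K` the
bound on `u` over the compact set `closure Ω` suffices. To pass from scale `(K + 1) s` to `s`,
take `‖x - y‖ ≤ s`. If `x` or `y` lies within `K s` of `∂Ω`, compare both with a nearest boundary
point. Otherwise the balls of radius `ε = K s` around `x` and `y` lie in `Ω`, `u` is within
`C₂ ε ^ α` of its averages over them, and the two averages differ by at most `2 n s / ε` times
the oscillation of `u` on the union of the balls, which is `C ((K + 1) s) ^ α` at the previous
scale. As `α < 1`, `(K + 1) ^ α / K → 0`, so for large `K` this term is at most `C s ^ α / 2`.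
-/

open MeasureTheory Metric Module Set
open scoped ENNReal

theorem forall_pos_of_forall_ge_of_scale {P : ℝ → Prop} {δ c : ℝ} (hc : 1 < c)
    (hlarge : ∀ s, δ ≤ s → P s) (hstep : ∀ s, 0 < s → s < δ → P (c * s) → P s) :
    ∀ s, 0 < s → P s := by
  suffices h : ∀ k : ℕ, ∀ s, 0 < s → δ ≤ c ^ k * s → P s by
    intro s hs
    obtain ⟨k, hk⟩ := pow_unbounded_of_one_lt (δ / s) hc
    exact h k s hs ((div_le_iff₀ hs).1 hk.le)
  intro k
  induction k with
  | zero => exact fun s _ hs => hlarge s (by simpa using hs)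
  | succ k ih =>
    intro s hs hks
    rcases le_or_gt δ s with hδs | hsδ
    · exact hlarge s hδs
    · refine hstep s hs hsδ (ih (c * s) (by positivity) ?_)
      rwa [← mul_assoc, ← pow_succ]

theorem exists_one_lt_mul_add_one_rpow_le {a α : ℝ} (ha : 0 ≤ a) (hα0 : 0 ≤ α) (hα1 : α < 1) :
    ∃ K : ℝ, 1 < K ∧ a * (K + 1) ^ α ≤ K := by
  set K := (2 * a + 2) ^ (1 - α)⁻¹
  have hK : 1 < K := Real.one_lt_rpow (by linarith) (inv_pos.2 (sub_pos.2 hα1))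
  have hKpow : K ^ (1 - α) = 2 * a + 2 := by
    rw [← Real.rpow_mul (by linarith), inv_mul_cancel₀ (sub_pos.2 hα1).ne', Real.rpow_one]
  refine ⟨K, hK, ?_⟩
  calc a * (K + 1) ^ α ≤ a * (2 * K) ^ α := by gcongr; linarith
    _ = a * 2 ^ α * K ^ α := by rw [Real.mul_rpow zero_le_two (by linarith)]; ring
    _ ≤ a * 2 * K ^ α := by
        gcongr
        simpa using Real.rpow_le_rpow_of_exponent_le one_le_two hα1.le
    _ ≤ K ^ (1 - α) * K ^ α := by rw [hKpow]; gcongr; linarith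
    _ = K := by rw [← Real.rpow_add (by linarith), sub_add_cancel, Real.rpow_one]

/-- Since `μ s = μ t`, also `μ (s \ t) = μ (t \ s)`, so only `s \ t` and `t \ s` contribute
and `f` may be replaced there by `f - c`. -/
theorem abs_setAverage_sub_setAverage_le {X : Type*} [MeasurableSpace X] {μ : Measure X}
    {s t : Set X} {f : X → ℝ} {c ω : ℝ} (hs : MeasurableSet s) (ht : MeasurableSet t)
    (hst : μ s = μ t) (hs_top : μ s ≠ ∞) (hfs : IntegrableOn f s μ) (hft : IntegrableOn f t μ)
    (hω : ∀ p ∈ s ∪ t, |f p - c| ≤ ω) :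
    |⨍ p in s, f p ∂μ - ⨍ p in t, f p ∂μ| ≤ 2 * ω * μ.real (s \ t) / μ.real s := by
  have hsdiff : μ.real (s \ t) = μ.real (t \ s) := by
    rw [measureReal_def, measureReal_def, measure_sdiff_symm hs.nullMeasurableSet
      ht.nullMeasurableSet hst (measure_ne_top_of_subset inter_subset_left hs_top)]
  have hunion : μ (s ∪ t) < ∞ :=
    (measure_union_le s t).trans_lt (by simp [← hst, hs_top.lt_top])
  have hconst (v : Set X) (hv : v ⊆ s ∪ t) : IntegrableOn (fun _ => c) v μ :=
    integrableOn_const ((measure_mono hv).trans_lt hunion).ne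
  have hbound (v w : Set X) (hv : v ⊆ s ∪ t) :
      |∫ p in v \ w, (f p - c) ∂μ| ≤ ω * μ.real (v \ w) := by
    simpa only [Real.norm_eq_abs] using norm_setIntegral_le_of_norm_le_const
      ((measure_mono (sdiff_subset.trans hv)).trans_lt hunion)
      fun p hp => (Real.norm_eq_abs _).trans_le (hω p (hv hp.1))
  have hint : ∫ p in s, f p ∂μ - ∫ p in t, f p ∂μ
      = ∫ p in s \ t, (f p - c) ∂μ - ∫ p in t \ s, (f p - c) ∂μ := by
    rw [integral_sub (hfs.mono_set sdiff_subset) (hconst _ (sdiff_subset.trans subset_union_left)),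
      integral_sub (hft.mono_set sdiff_subset) (hconst _ (sdiff_subset.trans subset_union_right)),
      ← integral_inter_add_sdiff ht hfs, ← integral_inter_add_sdiff hs hft, inter_comm,
      setIntegral_const, setIntegral_const, hsdiff]
    ring
  have hreal : μ.real s = μ.real t := by rw [measureReal_def, measureReal_def, hst]
  rw [setAverage_eq, setAverage_eq, ← hreal, smul_eq_mul, smul_eq_mul, ← mul_sub, hint, abs_mul,
    abs_inv, abs_of_nonneg measureReal_nonneg, inv_mul_eq_div]
  gcongr
  calc _ ≤ _ := abs_sub _ _
    _ ≤ ω * μ.real (s \ t) + ω * μ.real (t \ s) :=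
        add_le_add (hbound s t subset_union_left) (hbound t s subset_union_right)
    _ = 2 * ω * μ.real (s \ t) := by rw [← hsdiff]; ring

/-- The ball is connected and misses `frontier s`, so it cannot leave `s`. -/
theorem ball_subset_of_le_infDist_frontier {F : Type*} [NormedAddCommGroup F] [NormedSpace ℝ F]
    {s : Set F} {x : F} {ε : ℝ} (hx : x ∈ s) (hε : ε ≤ infDist x (frontier s)) :
    ball x ε ⊆ s := by
  have hfr : Disjoint (ball x ε) (frontier s) := disjoint_left.2 fun p hp hpf =>
    ((infDist_le_dist_of_mem hpf).trans_lt (mem_ball'.1 hp)).not_ge hε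
  rcases le_or_gt ε 0 with hε0 | hε0
  · simp [ball_eq_empty.2 hε0]
  have hcover : ball x ε ⊆ interior s ∪ (closure s)ᶜ := fun q hq => by
    by_cases hq' : q ∈ closure s
    · exact Or.inl (by_contra fun h => hfr.ne_of_mem hq ⟨hq', h⟩ rfl)
    · exact Or.inr hq'
  have hxi : x ∈ interior s :=
    (hcover (mem_ball_self hε0)).resolve_right (not_not.2 (subset_closure hx))
  exact (isPreconnected_ball.subset_left_of_subset_union isOpen_interior
    (isClosed_closure (s := s)).isOpen_compl
    (disjoint_compl_right.mono_left interior_subset_closure) hcover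
    ⟨x, mem_ball_self hε0, hxi⟩).trans interior_subset

theorem abs_sub_le_of_frontier_holder {F : Type*} [NormedAddCommGroup F] [ProperSpace F]
    {Ω : Set F} {u : F → ℝ} {C₁ α ρ : ℝ} (hC₁ : 0 ≤ C₁) (hα : 0 ≤ α)
    (hbdry : ∀ x ∈ Ω, ∀ z ∈ frontier Ω, |u x - u z| ≤ C₁ * ‖x - z‖ ^ α)
    (hfr : (frontier Ω).Nonempty) {x y : F} (hx : x ∈ Ω) (hy : y ∈ Ω)
    (hρ : infDist x (frontier Ω) + ‖x - y‖ ≤ ρ) :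
    |u x - u y| ≤ 2 * C₁ * ρ ^ α := by
  obtain ⟨z, hz, hxz⟩ := isClosed_frontier.exists_infDist_eq_dist hfr x
  have hxz' : ‖x - z‖ ≤ ρ := by
    rw [← dist_eq_norm, ← hxz]; linarith [norm_nonneg (x - y)]
  have hyz : ‖y - z‖ ≤ ρ := by
    calc ‖y - z‖ ≤ ‖y - x‖ + ‖x - z‖ := norm_sub_le_norm_sub_add_norm_sub _ _ _
      _ ≤ ρ := by rw [← dist_eq_norm x z, ← hxz, norm_sub_rev]; linarith
  calc |u x - u y| ≤ |u x - u z| + |u y - u z| := by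
        rw [abs_sub_comm (u y)]; exact abs_sub_le _ _ _
    _ ≤ C₁ * ‖x - z‖ ^ α + C₁ * ‖y - z‖ ^ α := add_le_add (hbdry x hx z hz) (hbdry y hy z hz)
    _ ≤ 2 * C₁ * ρ ^ α := by
        have := Real.rpow_le_rpow (norm_nonneg _) hxz' hα
        have := Real.rpow_le_rpow (norm_nonneg _) hyz hα
        nlinarith

def HolderAtScale {F : Type*} [NormedAddCommGroup F] (Ω : Set F) (u : F → ℝ) (C α s : ℝ) :
    Prop :=
  ∀ x ∈ Ω, ∀ y ∈ Ω, ‖x - y‖ ≤ s → |u x - u y| ≤ C * s ^ α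

theorem holderAtScale_of_abs_sub_le {F : Type*} [NormedAddCommGroup F] {Ω : Set F} {u : F → ℝ}
    {M C α δ s : ℝ} (hM : ∀ x ∈ Ω, ∀ y ∈ Ω, |u x - u y| ≤ M) (hC : 0 ≤ C) (hMC : M ≤ C * δ ^ α)
    (hδ : 0 ≤ δ) (hα : 0 ≤ α) (hs : δ ≤ s) : HolderAtScale Ω u C α s :=
  fun x hx y hy _ => (hM x hx y hy).trans (hMC.trans (by gcongr))

section Haar

variable {E : Type*} [NormedAddCommGroup E] [NormedSpace ℝ E] [FiniteDimensional ℝ E]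
  [MeasurableSpace E] [BorelSpace E] (μ : Measure E) [μ.IsAddHaarMeasure]

theorem measureReal_ball_mul_of_pos (x : E) {r : ℝ} (hr : 0 < r) (ε : ℝ) :
    μ.real (ball x (r * ε)) = r ^ finrank ℝ E * μ.real (ball x ε) := by
  rw [measureReal_def, Measure.addHaar_ball_mul_of_pos μ x hr, ENNReal.toReal_mul,
    ENNReal.toReal_ofReal (by positivity), Measure.addHaar_real_ball_center μ x, measureReal_def]

theorem measureReal_ball_sdiff_ball_le {x y : E} {ε : ℝ} (hxy : dist x y < ε) :
    μ.real (ball x ε \ ball y ε) ≤ finrank ℝ E * (dist x y / ε) * μ.real (ball x ε) := by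
  have hε : 0 < ε := dist_nonneg.trans_lt hxy
  set t := dist x y / ε
  have ht0 : 0 ≤ t := div_nonneg dist_nonneg hε.le
  have ht1 : t < 1 := (div_lt_one hε).2 hxy
  have hinner : ball x ((1 - t) * ε) ⊆ ball y ε := by
    refine ball_subset_ball' ?_
    rw [sub_mul, div_mul_cancel₀ _ hε.ne', dist_comm]
    linarith
  have hBernoulli : 1 - finrank ℝ E * t ≤ (1 - t) ^ finrank ℝ E := by
    simpa [sub_eq_add_neg] using
      one_add_mul_le_pow (a := -t) (by linarith) (finrank ℝ E)
  calc μ.real (ball x ε \ ball y ε) ≤ μ.real (ball x ε \ ball x ((1 - t) * ε)) :=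
        measureReal_mono (sdiff_subset_sdiff_right hinner)
          ((measure_mono sdiff_subset).trans_lt measure_ball_lt_top).ne
    _ = μ.real (ball x ε) - (1 - t) ^ finrank ℝ E * μ.real (ball x ε) := by
        rw [measureReal_sdiff (ball_subset_ball (by nlinarith))
          measurableSet_ball, measureReal_ball_mul_of_pos μ x (by linarith)]
    _ ≤ finrank ℝ E * t * μ.real (ball x ε) := by
        nlinarith [measureReal_nonneg (μ := μ) (s := ball x ε)]

theorem abs_setAverage_ball_sub_setAverage_ball_le {f : E → ℝ} {x y : E} {ε c ω : ℝ}
    (hxy : dist x y < ε) (hfx : IntegrableOn f (ball x ε) μ) (hfy : IntegrableOn f (ball y ε) μ)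
    (hω : 0 ≤ ω) (hosc : ∀ p ∈ ball x ε ∪ ball y ε, |f p - c| ≤ ω) :
    |⨍ p in ball x ε, f p ∂μ - ⨍ p in ball y ε, f p ∂μ|
      ≤ 2 * ω * (finrank ℝ E * (dist x y / ε)) := by
  have hε : 0 < ε := dist_nonneg.trans_lt hxy
  have hball : 0 < μ.real (ball x ε) :=
    ENNReal.toReal_pos (measure_ball_pos μ x hε).ne' measure_ball_lt_top.ne
  calc _ ≤ 2 * ω * μ.real (ball x ε \ ball y ε) / μ.real (ball x ε) :=
        abs_setAverage_sub_setAverage_le measurableSet_ball measurableSet_ball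
          (by rw [Measure.addHaar_ball_center μ x, Measure.addHaar_ball_center μ y])
          measure_ball_lt_top.ne hfx hfy hosc
    _ ≤ 2 * ω * (finrank ℝ E * (dist x y / ε) * μ.real (ball x ε)) / μ.real (ball x ε) := by
        gcongr; exact measureReal_ball_sdiff_ball_le μ hxy
    _ = 2 * ω * (finrank ℝ E * (dist x y / ε)) := by field_simp

theorem abs_sub_le_of_abs_setAverage_ball_sub_le {f : E → ℝ} {x y : E} {ε A ω : ℝ}
    (hxy : dist x y < ε) (hfx : IntegrableOn f (ball x ε) μ) (hfy : IntegrableOn f (ball y ε) μ)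
    (hAx : |⨍ p in ball x ε, f p ∂μ - f x| ≤ A) (hAy : |⨍ p in ball y ε, f p ∂μ - f y| ≤ A)
    (hω : 0 ≤ ω) (hosc : ∀ p ∈ ball x ε ∪ ball y ε, |f p - f x| ≤ ω) :
    |f x - f y| ≤ 2 * A + 2 * ω * (finrank ℝ E * (dist x y / ε)) := by
  have havg := abs_setAverage_ball_sub_setAverage_ball_le μ hxy hfx hfy hω hosc
  calc |f x - f y| ≤ |⨍ p in ball x ε, f p ∂μ - f x|
        + |⨍ p in ball x ε, f p ∂μ - ⨍ p in ball y ε, f p ∂μ|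
        + |⨍ p in ball y ε, f p ∂μ - f y| := by
        rw [abs_sub_comm _ (f x)]
        linarith [abs_sub_le (f x) (⨍ p in ball x ε, f p ∂μ) (f y),
          abs_sub_le (⨍ p in ball x ε, f p ∂μ) (⨍ p in ball y ε, f p ∂μ) (f y)]
    _ ≤ 2 * A + 2 * ω * (finrank ℝ E * (dist x y / ε)) := by linarith

theorem ContinuousOn.integrableOn_ball_of_ball_subset {Ω : Set E} {f : E → ℝ}
    (hf : ContinuousOn f (closure Ω)) {x : E} {ε : ℝ} (hε : 0 < ε) (hx : ball x ε ⊆ Ω) :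
    IntegrableOn f (ball x ε) μ :=
  ((hf.mono (closure_ball x hε.ne' ▸ closure_mono hx)).integrableOn_compact
    (isCompact_closedBall x ε)).mono_set ball_subset_closedBall

theorem HolderAtScale.of_add_one_mul {Ω : Set E} {u : E → ℝ} (hu : ContinuousOn u (closure Ω))
    {ε₀ C₁ C₂ α K C s : ℝ}
    (hbdry : ∀ x ∈ Ω, ∀ z ∈ frontier Ω, |u x - u z| ≤ C₁ * ‖x - z‖ ^ α)
    (hreg : ∀ ε : ℝ, 0 < ε → ε < ε₀ → ∀ x ∈ Ω, ε < infDist x (frontier Ω) →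
      |(⨍ y in ball x ε, u y ∂μ) - u x| ≤ C₂ * ε ^ α)
    (hfr : (frontier Ω).Nonempty) (hα : 0 ≤ α) (hC₁ : 0 ≤ C₁) (hC : 0 ≤ C) (hK : 1 < K)
    (hKdim : 4 * finrank ℝ E * (K + 1) ^ α ≤ K) (hCbdry : 2 * C₁ * (K + 1) ^ α ≤ C)
    (hCreg : 4 * C₂ * K ^ α ≤ C) (hs : 0 < s) (hsε₀ : K * s < ε₀)
    (ih : HolderAtScale Ω u C α ((K + 1) * s)) : HolderAtScale Ω u C α s := by
  have hscale : ((K + 1) * s) ^ α = (K + 1) ^ α * s ^ α := Real.mul_rpow (by linarith) hs.le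
  have hnear : ∀ x ∈ Ω, ∀ y ∈ Ω, ‖x - y‖ ≤ s → infDist x (frontier Ω) ≤ K * s →
      |u x - u y| ≤ C * s ^ α := fun x hx y hy hxy hd =>
    (abs_sub_le_of_frontier_holder hC₁ hα hbdry hfr hx hy (ρ := (K + 1) * s) (by linarith)).trans
      (by rw [hscale, ← mul_assoc]; gcongr)
  intro x hx y hy hxy
  rcases le_or_gt (infDist x (frontier Ω)) (K * s) with hdx | hdx
  · exact hnear x hx y hy hxy hdx
  rcases le_or_gt (infDist y (frontier Ω)) (K * s) with hdy | hdy
  · rw [abs_sub_comm]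
    exact hnear y hy x hx (by rwa [norm_sub_rev]) hdy
  have hKs : 0 < K * s := by positivity
  have hballx := ball_subset_of_le_infDist_frontier hx hdx.le
  have hbally := ball_subset_of_le_infDist_frontier hy hdy.le
  have hdist : dist x y ≤ s := by rwa [dist_eq_norm]
  have hosc : ∀ p ∈ ball x (K * s) ∪ ball y (K * s), |u p - u x| ≤ C * ((K + 1) * s) ^ α := by
    intro p hp
    refine ih p (hp.elim (hballx ·) (hbally ·)) x hx ?_
    rw [← dist_eq_norm]
    rcases hp with hp | hp
    · linarith [mem_ball.1 hp]
    · linarith [mem_ball.1 hp, dist_triangle p y x, dist_comm x y]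
  calc |u x - u y|
      ≤ 2 * (C₂ * (K * s) ^ α)
        + 2 * (C * ((K + 1) * s) ^ α) * (finrank ℝ E * (dist x y / (K * s))) :=
        abs_sub_le_of_abs_setAverage_ball_sub_le μ (by nlinarith)
          (hu.integrableOn_ball_of_ball_subset μ hKs hballx)
          (hu.integrableOn_ball_of_ball_subset μ hKs hbally)
          (hreg _ hKs hsε₀ x hx hdx) (hreg _ hKs hsε₀ y hy hdy) (by positivity) hosc
    _ ≤ 2 * (C₂ * (K ^ α * s ^ α)) + 2 * (C * ((K + 1) ^ α * s ^ α)) * (finrank ℝ E * (1 / K)) := by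
        have hratio : dist x y / (K * s) ≤ 1 / K := by
          rw [div_le_div_iff₀ hKs (by linarith)]; nlinarith
        rw [hscale, Real.mul_rpow (by linarith) hs.le]
        gcongr
    _ = (4 * C₂ * K ^ α) / 2 * s ^ α + C * (4 * finrank ℝ E * (K + 1) ^ α / K) / 2 * s ^ α := by
        field_simp; ring
    _ ≤ C / 2 * s ^ α + C * (K / K) / 2 * s ^ α := by gcongr
    _ = C * s ^ α := by rw [div_self (by linarith)]; ring

end Haar

theorem stmt_1_general
    (n : ℕ) (Ω : Set (EuclideanSpace ℝ (Fin n)))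
    (hΩb : Bornology.IsBounded Ω)
    (u : EuclideanSpace ℝ (Fin n) → ℝ) (hu : ContinuousOn u (closure Ω))
    (ε₀ C₁ C₂ α : ℝ) (hε₀ : 0 < ε₀) (hC₁ : 0 < C₁) (hC₂ : 0 < C₂)
    (hα : α ∈ Set.Ioo (0:ℝ) 1)
    (hbdry : ∀ x ∈ Ω, ∀ y ∈ frontier Ω, |u x - u y| ≤ C₁ * ‖x - y‖ ^ α)
    (hreg : ∀ ε : ℝ, 0 < ε → ε < ε₀ → ∀ x ∈ Ω, ε < infDist x (frontier Ω) →
      |(⨍ y in ball x ε, u y) - u x| ≤ C₂ * ε ^ α) :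
    ∃ C > 0, ∀ x ∈ Ω, ∀ y ∈ Ω, |u x - u y| ≤ C * ‖x - y‖ ^ α := by
  obtain ⟨hα0, hα1⟩ := hα
  obtain ⟨R, hR0, hR⟩ :=
    (hΩb.isCompact_closure.image_of_continuousOn hu).isBounded.exists_pos_norm_le
  have hosc (x) (hx : x ∈ Ω) (y) (hy : y ∈ Ω) : |u x - u y| ≤ 2 * R := by
    have hux := hR _ (mem_image_of_mem u (subset_closure hx))
    have huy := hR _ (mem_image_of_mem u (subset_closure hy))
    rw [Real.norm_eq_abs] at hux huy
    linarith [abs_sub (u x) (u y)]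
  obtain ⟨K, hK1, hK⟩ := exists_one_lt_mul_add_one_rpow_le (a := 4 * n) (by positivity) hα0.le hα1
  have hδ : 0 < ε₀ / K := by positivity
  have hR' : 0 ≤ 2 * R / (ε₀ / K) ^ α := by positivity
  have hC₁' : 0 < 2 * C₁ * (K + 1) ^ α := by positivity
  have hC₂' : 0 ≤ 4 * C₂ * K ^ α := by positivity
  set C := 2 * R / (ε₀ / K) ^ α + 2 * C₁ * (K + 1) ^ α + 4 * C₂ * K ^ α
  refine ⟨C, by linarith, fun x hx y hy => ?_⟩
  rcases eq_or_ne x y with rfl | hxy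
  · simp [Real.zero_rpow hα0.ne']
  have : Nontrivial (EuclideanSpace ℝ (Fin n)) := ⟨x, y, hxy⟩
  have hfr : (frontier Ω).Nonempty :=
    nonempty_frontier_iff.2 ⟨⟨x, hx⟩, fun h => NormedSpace.unbounded_univ ℝ _ (h ▸ hΩb)⟩
  have hscale : ∀ s, 0 < s → HolderAtScale Ω u C α s := by
    refine forall_pos_of_forall_ge_of_scale (δ := ε₀ / K) (c := K + 1) (by linarith)
      (fun s hs => holderAtScale_of_abs_sub_le hosc (by linarith) ?_ hδ.le hα0.le hs)
      (fun s hs hsδ ih => ih.of_add_one_mul volume hu hbdry hreg hfr hα0.le hC₁.le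
        (by linarith) hK1 (by simpa using hK) (by linarith) (by linarith) hs ?_)
    · rw [← div_le_iff₀ (by positivity)]
      linarith
    · rwa [lt_div_iff₀ (by linarith), mul_comm] at hsδ
  exact hscale _ (norm_pos_iff.2 (sub_ne_zero.2 hxy)) x hx y hy le_rfl

/-- Hölder continuity via ball-average regularization: if `u` is Hölder
against boundary points and its ball averages `û_ε` satisfy `|û_ε - u| ≤ C₂ ε^α` on `Ω_ε`,
then `u` is globally `α`-Hölder on `Ω`. -/
theorem stmt_1
    (n : ℕ) (Ω : Set (EuclideanSpace ℝ (Fin n)))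
    (hΩo : IsOpen Ω) (hΩb : Bornology.IsBounded Ω) (hΩc : IsConnected Ω)
    (u : EuclideanSpace ℝ (Fin n) → ℝ) (hu : ContinuousOn u (closure Ω))
    (ε₀ C₁ C₂ α : ℝ) (hε₀ : 0 < ε₀) (hC₁ : 0 < C₁) (hC₂ : 0 < C₂)
    (hα : α ∈ Set.Ioo (0:ℝ) 1)
    (hbdry : ∀ x ∈ Ω, ∀ y ∈ frontier Ω, |u x - u y| ≤ C₁ * ‖x - y‖ ^ α)
    (hreg : ∀ ε : ℝ, 0 < ε → ε < ε₀ → ∀ x ∈ Ω, ε < infDist x (frontier Ω) →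
      |(⨍ y in ball x ε, u y) - u x| ≤ C₂ * ε ^ α) :
    ∃ C > 0, ∀ x ∈ Ω, ∀ y ∈ Ω, |u x - u y| ≤ C * ‖x - y‖ ^ α :=
  stmt_1_general n Ω hΩb u hu ε₀ C₁ C₂ α hε₀ hC₁ hC₂ hα hbdry hreg
end

section
/- Let Ω ⊂ ℝⁿ be a bounded domain and let u ∈ C(Ω̄). Let η ∈ L¹(ℝⁿ) be a non-negative Borel function with compact support contained in B_R(0) and ∫_{ℝⁿ} η dμ = 1. Let g : ℝⁿ → [0,∞) be a measurable function such that 2 g(z) ≤ η(w) whenever |w − z| ≤ 1, and set κ := ∫_{ℝⁿ} g dμ (automatically κ ≤ 1/2). Let x, y ∈ Ω with d := |x − y| > 0, let r ≥ d, and assume x, y ∈ Ω_{(R+1)d}. Then |u_d(x) − u_d(y)| ≤ κ ω(2r) + (1 − 2κ) ω(r), where u_d = u * η_d is the kernel regularization at scale d and ω is the modulus of continuity of u on Ω. -/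
/-!
With `e = x - y`, `k = η_d` and `h = g_d`, the hypothesis on `g` rescales to
`h z + h (z - e) ≤ k z`. Split `k = (k - h - h(· - e)) + h + h(· - e)`. The nonnegative first part
has mass `1 - 2κ` and pairs `u(x - z)` with `u(y - z)`, points at distance `d ≤ r`. Translating
by `e` turns `h(· - e)` into `h` and `u(x - ·)` into `u(y - ·)`, so the last two parts cancel in
pairs up to `∫ h(z) (u(x - z) - u(2y - x - z))`, which compares points at distance `2d ≤ 2r`.
-/

open MeasureTheory Metric

section Measure

variable {α : Type*} [MeasurableSpace α] {μ : Measure α}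

theorem abs_integral_mul_le_of_abs_le_on_support {w f : α → ℝ} (hw : Integrable w μ)
    (hw_nonneg : ∀ z, 0 ≤ w z) {A : ℝ} (hA : ∀ z, w z ≠ 0 → |f z| ≤ A) :
    |∫ z, w z * f z ∂μ| ≤ (∫ z, w z ∂μ) * A := by
  have hpointwise : ∀ z, |w z * f z| ≤ w z * A := fun z => by
    rw [abs_mul, abs_of_nonneg (hw_nonneg z)]
    rcases eq_or_ne (w z) 0 with h0 | h0
    · simp [h0]
    · exact mul_le_mul_of_nonneg_left (hA z h0) (hw_nonneg z)
  by_cases hwf : Integrable (fun z => w z * f z) μ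
  · calc |∫ z, w z * f z ∂μ| ≤ ∫ z, |w z * f z| ∂μ := abs_integral_le_integral_abs
      _ ≤ ∫ z, w z * A ∂μ := integral_mono hwf.abs (hw.mul_const A) hpointwise
      _ = (∫ z, w z ∂μ) * A := integral_mul_const A _
  · rw [integral_undef hwf, abs_zero]
    by_cases hw0 : ∃ z, w z ≠ 0
    · obtain ⟨z, hz⟩ := hw0
      exact mul_nonneg (integral_nonneg hw_nonneg) ((abs_nonneg _).trans (hA z hz))
    · push Not at hw0
      simp [hw0]

end Measure

section Shift

variable {E : Type*} [AddGroup E] [MeasurableSpace E] [MeasurableAdd E] {μ : Measure E}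
  [μ.IsAddRightInvariant] {k h F G H : E → ℝ} {e : E}

theorem integral_mul_sub_integral_mul_eq_of_shift (hFG : ∀ z, F (z + e) = G z)
    (hGH : ∀ z, G (z + e) = H z) (hkF : Integrable (fun z => k z * F z) μ)
    (hkG : Integrable (fun z => k z * G z) μ) (hhF : Integrable (fun z => h z * F z) μ)
    (hhG : Integrable (fun z => h z * G z) μ) (hhH : Integrable (fun z => h z * H z) μ) :
    ∫ z, k z * F z ∂μ - ∫ z, k z * G z ∂μ =
      ∫ z, (k z - h z - h (z - e)) * (F z - G z) ∂μ + ∫ z, h z * (F z - H z) ∂μ := by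
  have hF : ∀ z, G (z - e) = F z := fun z => by rw [← hFG, sub_add_cancel]
  have hG : ∀ z, H (z - e) = G z := fun z => by rw [← hGH, sub_add_cancel]
  have hhF' : Integrable (fun z => h (z - e) * F z) μ := by
    simpa only [hF] using hhG.comp_sub_right e
  have hhG' : Integrable (fun z => h (z - e) * G z) μ := by
    simpa only [hG] using hhH.comp_sub_right e
  have hshiftF : ∫ z, h (z - e) * F z ∂μ = ∫ z, h z * G z ∂μ := by
    simpa only [hF] using integral_sub_right_eq_self (fun z => h z * G z) e
  have hshiftG : ∫ z, h (z - e) * G z ∂μ = ∫ z, h z * H z ∂μ := by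
    simpa only [hG] using integral_sub_right_eq_self (fun z => h z * H z) e
  have hexpand : (fun z => (k z - h z - h (z - e)) * (F z - G z)) = fun z =>
      (k z * F z - k z * G z) - (h z * F z - h z * G z) - (h (z - e) * F z - h (z - e) * G z) :=
    funext fun z => by ring
  have hsplit : ∫ z, h z * (F z - H z) ∂μ = ∫ z, h z * F z ∂μ - ∫ z, h z * H z ∂μ := by
    simp_rw [mul_sub]
    exact integral_sub hhF hhH
  rw [hexpand, integral_sub ((hkF.sub' hkG).sub' (hhF.sub' hhG)) (hhF'.sub' hhG'),
    integral_sub (hkF.sub' hkG) (hhF.sub' hhG), integral_sub hkF hkG, integral_sub hhF hhG,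
    integral_sub hhF' hhG', hshiftF, hshiftG, hsplit]
  ring

theorem abs_integral_mul_sub_integral_mul_le_of_shift (hFG : ∀ z, F (z + e) = G z)
    (hGH : ∀ z, G (z + e) = H z) (hk : Integrable k μ) (hh : Integrable h μ)
    (hkF : Integrable (fun z => k z * F z) μ) (hkG : Integrable (fun z => k z * G z) μ)
    (hhF : Integrable (fun z => h z * F z) μ) (hhG : Integrable (fun z => h z * G z) μ)
    (hhH : Integrable (fun z => h z * H z) μ) (hh_nonneg : ∀ z, 0 ≤ h z)
    (hhk : ∀ z, h z + h (z - e) ≤ k z) (hk1 : ∫ z, k z ∂μ = 1) {A B : ℝ}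
    (hA : ∀ z, k z ≠ 0 → |F z - G z| ≤ A) (hB : ∀ z, h z ≠ 0 → |F z - H z| ≤ B) :
    |∫ z, k z * F z ∂μ - ∫ z, k z * G z ∂μ| ≤
      (∫ z, h z ∂μ) * B + (1 - 2 * ∫ z, h z ∂μ) * A := by
  have hw_int : ∫ z, (k z - h z - h (z - e)) ∂μ = 1 - 2 * ∫ z, h z ∂μ := by
    rw [integral_sub (hk.sub' hh) (hh.comp_sub_right e), integral_sub hk hh,
      integral_sub_right_eq_self h e, hk1]
    ring
  have hw_nonneg : ∀ z, 0 ≤ k z - h z - h (z - e) := fun z => by linarith [hhk z]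
  have hw_supp : ∀ z, k z - h z - h (z - e) ≠ 0 → k z ≠ 0 := fun z hw hk0 =>
    hw (by linarith [hhk z, hh_nonneg z, hh_nonneg (z - e)])
  have hw_bound := abs_integral_mul_le_of_abs_le_on_support
    ((hk.sub' hh).sub' (hh.comp_sub_right e)) hw_nonneg (f := fun z => F z - G z)
    fun z hz => hA z (hw_supp z hz)
  have hh_bound := abs_integral_mul_le_of_abs_le_on_support hh hh_nonneg
    (f := fun z => F z - H z) hB
  rw [integral_mul_sub_integral_mul_eq_of_shift hFG hGH hkF hkG hhF hhG hhH]
  rw [hw_int] at hw_bound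
  linarith [abs_add_le (∫ z, (k z - h z - h (z - e)) * (F z - G z) ∂μ)
    (∫ z, h z * (F z - H z) ∂μ)]

end Shift

section Normed

variable {E : Type*} [NormedAddCommGroup E]

theorem ball_infDist_frontier_subset [NormedSpace ℝ E] [FiniteDimensional ℝ E] {s : Set E}
    {p : E} (hp : p ∈ s) : ball p (infDist p (frontier s)) ⊆ s := by
  intro q hq
  by_contra hqs
  obtain ⟨w, hw, hpw⟩ :=
    exists_mem_frontier_infDist_compl_eq_dist hp fun h => hqs (h ▸ Set.mem_univ q)
  have hle := (infDist_le_dist_of_mem hw).trans (hpw ▸ infDist_le_dist_of_mem hqs)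
  rw [mem_ball, dist_comm] at hq
  exact hle.not_gt hq

theorem sub_mem_ball_self_iff {p z : E} {ρ : ℝ} : p - z ∈ ball p ρ ↔ z ∈ ball 0 ρ := by
  simp

noncomputable def modulusOfContinuity (u : E → ℝ) (Ω : Set E) (s : ℝ) : ℝ :=
  sSup {t : ℝ | ∃ a ∈ Ω, ∃ b ∈ Ω, ‖a - b‖ ≤ s ∧ t = |u a - u b|}

theorem abs_sub_le_modulusOfContinuity {u : E → ℝ} {Ω : Set E} {M : ℝ}
    (hM : ∀ a ∈ Ω, |u a| ≤ M) {a b : E} (ha : a ∈ Ω) (hb : b ∈ Ω) {s : ℝ} (hab : ‖a - b‖ ≤ s) :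
    |u a - u b| ≤ modulusOfContinuity u Ω s := by
  refine le_csSup ⟨M + M, ?_⟩ ⟨a, ha, b, hb, hab, rfl⟩
  rintro _ ⟨a, ha, b, hb, -, rfl⟩
  exact (abs_sub _ _).trans (add_le_add (hM a ha) (hM b hb))

theorem integrable_mul_comp_sub [MeasurableSpace E] [OpensMeasurableSpace E] {μ : Measure E}
    {Ω : Set E} {u : E → ℝ} (hu : ContinuousOn u Ω) {M : ℝ} (hM : ∀ a ∈ Ω, |u a| ≤ M)
    {ψ : E → ℝ} (hψ : Integrable ψ μ) {ρ : ℝ} (hψ_supp : Function.support ψ ⊆ ball 0 ρ)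
    {p : E} (hp : ball p ρ ⊆ Ω) : Integrable (fun z => ψ z * u (p - z)) μ := by
  have hmaps : Set.MapsTo (p - ·) (ball 0 ρ) Ω := fun z hz => hp (sub_mem_ball_self_iff.2 hz)
  rw [← integrableOn_iff_integrable_of_support_subset
    ((Function.support_mul_subset_left _ _).trans hψ_supp)]
  refine hψ.integrableOn.mul_bdd (c := M)
    ((hu.comp (by fun_prop) hmaps).aestronglyMeasurable measurableSet_ball) ?_
  filter_upwards [self_mem_ae_restrict measurableSet_ball] with z hz
  exact hM _ (hmaps hz)

theorem abs_integral_mul_comp_sub_sub_le [MeasurableSpace E] [BorelSpace E] {μ : Measure E}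
    [μ.IsAddRightInvariant] {Ω : Set E} {u : E → ℝ} (hu : ContinuousOn u Ω) {M : ℝ}
    (hM : ∀ a ∈ Ω, |u a| ≤ M) {k h : E → ℝ} (hk : Integrable k μ) (hh : Integrable h μ) {ρ : ℝ}
    (hk_supp : Function.support k ⊆ ball 0 ρ) (hh_supp : Function.support h ⊆ ball 0 ρ)
    (hh_nonneg : ∀ z, 0 ≤ h z) {x y : E}
    (hhk : ∀ z, h z + h (z - (x - y)) ≤ k z) (hk1 : ∫ z, k z ∂μ = 1)
    (hx : ball x (ρ + ‖x - y‖) ⊆ Ω) (hy : ball y (ρ + ‖x - y‖) ⊆ Ω) {A B : ℝ}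
    (hA : ∀ a ∈ Ω, ∀ b ∈ Ω, ‖a - b‖ ≤ ‖x - y‖ → |u a - u b| ≤ A)
    (hB : ∀ a ∈ Ω, ∀ b ∈ Ω, ‖a - b‖ ≤ 2 * ‖x - y‖ → |u a - u b| ≤ B) :
    |∫ z, k z * u (x - z) ∂μ - ∫ z, k z * u (y - z) ∂μ| ≤
      (∫ z, h z ∂μ) * B + (1 - 2 * ∫ z, h z ∂μ) * A := by
  have hρ : ρ ≤ ρ + ‖x - y‖ := le_add_of_nonneg_right (norm_nonneg _)
  have hxρ : ball x ρ ⊆ Ω := (ball_subset_ball hρ).trans hx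
  have hyρ : ball y ρ ⊆ Ω := (ball_subset_ball hρ).trans hy
  have hx'ρ : ball (y - (x - y)) ρ ⊆ Ω :=
    (ball_subset_ball' (by rw [dist_eq_norm, sub_sub_cancel_left, norm_neg])).trans hy
  have hsub_mem {p : E} (hp : ball p ρ ⊆ Ω) {ψ : E → ℝ} (hψ : Function.support ψ ⊆ ball 0 ρ) {z : E}
      (hz : ψ z ≠ 0) : p - z ∈ Ω :=
    hp (sub_mem_ball_self_iff.2 (hψ hz))
  refine abs_integral_mul_sub_integral_mul_le_of_shift (e := x - y)
    (F := fun z => u (x - z)) (G := fun z => u (y - z)) (H := fun z => u (y - (x - y) - z))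
    (fun z => by simp only [sub_add_eq_sub_sub_swap, sub_sub_cancel])
    (fun z => by simp only [sub_add_eq_sub_sub_swap]) hk hh
    (integrable_mul_comp_sub hu hM hk hk_supp hxρ) (integrable_mul_comp_sub hu hM hk hk_supp hyρ)
    (integrable_mul_comp_sub hu hM hh hh_supp hxρ) (integrable_mul_comp_sub hu hM hh hh_supp hyρ)
    (integrable_mul_comp_sub hu hM hh hh_supp hx'ρ) hh_nonneg hhk hk1
    (fun z hz => hA _ (hsub_mem hxρ hk_supp hz) _ (hsub_mem hyρ hk_supp hz) (by simp))
    (fun z hz => hB _ (hsub_mem hxρ hh_supp hz) _ (hsub_mem hx'ρ hh_supp hz) ?_)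
  rw [show x - z - (y - (x - y) - z) = (x - y) + (x - y) by abel, two_mul]
  exact norm_add_le _ _

end Normed

section Rescale

variable {n : ℕ}

noncomputable def rescale (d : ℝ) (f : EuclideanSpace ℝ (Fin n) → ℝ)
    (z : EuclideanSpace ℝ (Fin n)) : ℝ :=
  (d ^ n)⁻¹ * f (d⁻¹ • z)

theorem integral_rescale {d : ℝ} (hd : 0 < d) (f : EuclideanSpace ℝ (Fin n) → ℝ) :
    ∫ z, rescale d f z = ∫ z, f z := by
  simp only [rescale]
  rw [integral_const_mul, Measure.integral_comp_inv_smul_of_nonneg volume f hd.le,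
    finrank_euclideanSpace_fin, smul_eq_mul, ← mul_assoc, inv_mul_cancel₀ (pow_pos hd n).ne',
    one_mul]

theorem MeasureTheory.Integrable.rescale {f : EuclideanSpace ℝ (Fin n) → ℝ} (hf : Integrable f)
    {d : ℝ} (hd : d ≠ 0) : Integrable (rescale d f) :=
  (hf.comp_smul (inv_ne_zero hd)).const_mul _

theorem rescale_nonneg {f : EuclideanSpace ℝ (Fin n) → ℝ} (hf : ∀ z, 0 ≤ f z) {d : ℝ}
    (hd : 0 ≤ d) (z : EuclideanSpace ℝ (Fin n)) : 0 ≤ rescale d f z :=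
  mul_nonneg (inv_nonneg.2 (pow_nonneg hd n)) (hf _)

theorem support_rescale_subset {f : EuclideanSpace ℝ (Fin n) → ℝ} {R d : ℝ} (hd : 0 < d)
    (hf : Function.support f ⊆ ball 0 R) : Function.support (rescale d f) ⊆ ball 0 (R * d) := by
  intro z hz
  have hz' := hf (right_ne_zero_of_mul hz)
  rw [mem_ball_zero_iff, norm_smul, Real.norm_of_nonneg (inv_nonneg.2 hd.le),
    inv_mul_lt_iff₀ hd] at hz'
  rwa [mem_ball_zero_iff, mul_comm]

theorem rescale_add_rescale_sub_le {g η : EuclideanSpace ℝ (Fin n) → ℝ}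
    (hgη : ∀ z w, ‖w - z‖ ≤ 1 → 2 * g z ≤ η w) {d : ℝ} (hd : 0 < d)
    {e : EuclideanSpace ℝ (Fin n)} (he : ‖e‖ = d) (z : EuclideanSpace ℝ (Fin n)) :
    rescale d g z + rescale d g (z - e) ≤ rescale d η z := by
  have h₁ : 2 * g (d⁻¹ • z) ≤ η (d⁻¹ • z) := hgη _ _ (by simp)
  have h₂ : 2 * g (d⁻¹ • (z - e)) ≤ η (d⁻¹ • z) := hgη _ _ <| by
    rw [← smul_sub, sub_sub_cancel, norm_smul, he, Real.norm_of_nonneg (inv_nonneg.2 hd.le),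
      inv_mul_cancel₀ hd.ne']
  have hc : 0 ≤ (d ^ n)⁻¹ := inv_nonneg.2 (pow_nonneg hd.le n)
  simp only [rescale]
  nlinarith

end Rescale

theorem stmt_2_general
    (n : ℕ) (Ω : Set (EuclideanSpace ℝ (Fin n)))
    (hΩb : Bornology.IsBounded Ω)
    (u : EuclideanSpace ℝ (Fin n) → ℝ) (hu : ContinuousOn u (closure Ω))
    (R : ℝ)
    (η : EuclideanSpace ℝ (Fin n) → ℝ)
    (hηint : Integrable η)
    (hηsupp : Function.support η ⊆ ball 0 R)
    (hη1 : (∫ x, η x) = 1)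
    (g : EuclideanSpace ℝ (Fin n) → ℝ)
    (hgm : Measurable g) (hgnn : ∀ z, 0 ≤ g z)
    (hgη : ∀ z w, ‖w - z‖ ≤ 1 → 2 * g z ≤ η w)
    (κ : ℝ) (hκ : κ = ∫ z, g z)
    (ω : ℝ → ℝ)
    (hω : ∀ s : ℝ, ω s = sSup {t : ℝ | ∃ a ∈ Ω, ∃ b ∈ Ω, ‖a - b‖ ≤ s ∧ t = |u a - u b|})
    (x y : EuclideanSpace ℝ (Fin n)) (hx : x ∈ Ω) (hy : y ∈ Ω)
    (d r : ℝ) (hd : d = ‖x - y‖) (hd0 : 0 < d) (hdr : d ≤ r)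
    (hxd : (R + 1) * d < infDist x (frontier Ω))
    (hyd : (R + 1) * d < infDist y (frontier Ω)) :
    |(∫ z, (d ^ n)⁻¹ * η (d⁻¹ • z) * u (x - z)) -
        (∫ z, (d ^ n)⁻¹ * η (d⁻¹ • z) * u (y - z))| ≤
      κ * ω (2 * r) + (1 - 2 * κ) * ω r := by
  obtain ⟨M, hM⟩ := hΩb.isCompact_closure.exists_bound_of_continuousOn hu
  have hg_le : ∀ z, g z ≤ η z := fun z => by linarith [hgη z z (by simp), hgnn z]
  have hg_int : Integrable g := hηint.mono' hgm.aestronglyMeasurable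
    (ae_of_all _ fun z => (abs_of_nonneg (hgnn z)).trans_le (hg_le z))
  have hg_supp : Function.support g ⊆ ball 0 R := fun z hz =>
    hηsupp fun h0 => hz (le_antisymm (h0 ▸ hg_le z) (hgnn z))
  have hball {p : EuclideanSpace ℝ (Fin n)} (hp : p ∈ Ω)
      (hpd : (R + 1) * d < infDist p (frontier Ω)) : ball p (R * d + ‖x - y‖) ⊆ Ω :=
    (ball_subset_ball (by rw [← hd]; linarith)).trans (ball_infDist_frontier_subset hp)
  have hmod {s : ℝ} {a b : EuclideanSpace ℝ (Fin n)} (ha : a ∈ Ω) (hb : b ∈ Ω)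
      (hab : ‖a - b‖ ≤ s) : |u a - u b| ≤ ω s := by
    rw [hω]
    exact abs_sub_le_modulusOfContinuity (fun a ha => hM a (subset_closure ha)) ha hb hab
  have key := abs_integral_mul_comp_sub_sub_le (μ := volume) (hu.mono subset_closure)
    (fun a ha => hM a (subset_closure ha)) (hηint.rescale hd0.ne') (hg_int.rescale hd0.ne')
    (support_rescale_subset hd0 hηsupp) (support_rescale_subset hd0 hg_supp)
    (rescale_nonneg hgnn hd0.le) (rescale_add_rescale_sub_le hgη hd0 hd.symm)
    ((integral_rescale hd0 η).trans hη1) (hball hx hxd) (hball hy hyd)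
    (fun a ha b hb hab => hmod (s := r) ha hb (by linarith))
    (fun a ha b hb hab => hmod (s := 2 * r) ha hb (by linarith))
  rw [integral_rescale hd0, ← hκ] at key
  exact key

/-- The key regularization inequality: for `x, y ∈ Ω_{(R+1)d}` with
`d = |x - y| > 0` and `r ≥ d`, the kernel regularizations at scale `d` satisfy
`|u_d(x) - u_d(y)| ≤ κ ω(2r) + (1 - 2κ) ω(r)`, where `ω` is the modulus of continuity of `u`
on `Ω` and `κ = ∫ g` for a function `g` with `2 g(z) ≤ η(w)` whenever `|w - z| ≤ 1`. -/
theorem stmt_2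
    (n : ℕ) (Ω : Set (EuclideanSpace ℝ (Fin n)))
    (hΩo : IsOpen Ω) (hΩb : Bornology.IsBounded Ω) (hΩc : IsConnected Ω)
    (u : EuclideanSpace ℝ (Fin n) → ℝ) (hu : ContinuousOn u (closure Ω))
    (R : ℝ) (hR : 0 < R)
    (η : EuclideanSpace ℝ (Fin n) → ℝ)
    (hηm : Measurable η) (hηnn : ∀ x, 0 ≤ η x)
    (hηint : Integrable η)
    (hηsupp : Function.support η ⊆ ball 0 R)
    (hη1 : (∫ x, η x) = 1)
    (g : EuclideanSpace ℝ (Fin n) → ℝ)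
    (hgm : Measurable g) (hgnn : ∀ z, 0 ≤ g z)
    (hgη : ∀ z w, ‖w - z‖ ≤ 1 → 2 * g z ≤ η w)
    (κ : ℝ) (hκ : κ = ∫ z, g z)
    (ω : ℝ → ℝ)
    (hω : ∀ s : ℝ, ω s = sSup {t : ℝ | ∃ a ∈ Ω, ∃ b ∈ Ω, ‖a - b‖ ≤ s ∧ t = |u a - u b|})
    (x y : EuclideanSpace ℝ (Fin n)) (hx : x ∈ Ω) (hy : y ∈ Ω)
    (d r : ℝ) (hd : d = ‖x - y‖) (hd0 : 0 < d) (hdr : d ≤ r)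
    (hxd : (R + 1) * d < infDist x (frontier Ω))
    (hyd : (R + 1) * d < infDist y (frontier Ω)) :
    |(∫ z, (d ^ n)⁻¹ * η (d⁻¹ • z) * u (x - z)) -
        (∫ z, (d ^ n)⁻¹ * η (d⁻¹ • z) * u (y - z))| ≤
      κ * ω (2 * r) + (1 - 2 * κ) * ω r :=
  stmt_2_general n Ω hΩb u hu R η hηint hηsupp hη1 g hgm hgnn hgη κ hκ ω hω x y hx hy d r hd hd0 hdr
    hxd hyd
end

section
/- Let α ∈ (0,1), κ ∈ (0, 1/2], A ≥ 0, B ≥ 0, ε₀ > 0, and let ω : (0, ∞) → [0, ∞) be a bounded function satisfying ω(r) ≤ max{ A r^α , B r^α + κ ω(2r) + (1 − 2κ) ω(r) } for every r ∈ (0, ε₀]. Let C₄ ≥ max{ A , B / ((1 − 2^{α−1}) κ) }. Then for every r ∈ (0, ε₀]: if ω(2r) ≤ C₄ (2r)^α, then ω(r) ≤ C₄ r^α. -/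
/-! Where `ω r` is controlled by the second branch of the maximum, absorbing `(1 - 2κ) ω r`
leaves `2κ ω r ≤ B r^α + κ ω(2r)`. The hypothesis on `ω(2r)` bounds `κ ω(2r)` by
`2κ C₄ 2^{α-1} r^α`, and the choice of `C₄` bounds `B` by `(1 - 2^{α-1}) κ C₄`; since
`2^{α-1} ≤ 1` the sum is at most `2κ C₄ r^α`. -/

lemma Real.two_mul_rpow {r : ℝ} (hr : 0 ≤ r) (α : ℝ) :
    (2 * r) ^ α = 2 * 2 ^ (α - 1) * r ^ α := by
  rw [Real.mul_rpow zero_le_two hr, Real.rpow_sub_one two_ne_zero]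
  ring

lemma le_mul_of_le_doubling_recursion {B C κ q t x y : ℝ} (hκ : 0 < κ) (hq : q ≤ 1)
    (hC : 0 ≤ C) (ht : 0 ≤ t) (hB : B ≤ C * ((1 - q) * κ)) (hy : y ≤ C * (2 * q * t))
    (hx : x ≤ B * t + κ * y + (1 - 2 * κ) * x) : x ≤ C * t := by
  have hBt : B * t ≤ C * ((1 - q) * κ) * t := mul_le_mul_of_nonneg_right hB ht
  have hκy : κ * y ≤ κ * (C * (2 * q * t)) := mul_le_mul_of_nonneg_left hy hκ.le
  have hq_step : C * t * κ * q ≤ C * t * κ := by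
    simpa using mul_le_mul_of_nonneg_left hq (by positivity : 0 ≤ C * t * κ)
  have h2κx : 2 * κ * x ≤ 2 * κ * (C * t) := by nlinarith
  exact le_of_mul_le_mul_left h2κx (by positivity)

theorem stmt_4_general
    (α κ A B ε₀ C₄ : ℝ) (ω : ℝ → ℝ)
    (hα : α ∈ Set.Ioo (0:ℝ) 1) (hκ : κ ∈ Set.Ioc (0:ℝ) (1/2))
    (hA : 0 ≤ A)
    (hineq : ∀ r : ℝ, 0 < r → r ≤ ε₀ →
      ω r ≤ max (A * r ^ α) (B * r ^ α + κ * ω (2 * r) + (1 - 2 * κ) * ω r))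
    (hC₄ : max A (B / ((1 - 2 ^ (α - 1)) * κ)) ≤ C₄) :
    ∀ r : ℝ, 0 < r → r ≤ ε₀ → ω (2 * r) ≤ C₄ * (2 * r) ^ α → ω r ≤ C₄ * r ^ α := by
  intro r hr hrε h2r
  have hq : (2:ℝ) ^ (α - 1) < 1 :=
    Real.rpow_lt_one_of_one_lt_of_neg one_lt_two (by linarith [hα.2])
  have hden : 0 < (1 - (2:ℝ) ^ (α - 1)) * κ := mul_pos (by linarith) hκ.1
  obtain ⟨hAC, hBC⟩ := max_le_iff.mp hC₄
  have ht : 0 ≤ r ^ α := Real.rpow_nonneg hr.le α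
  rcases le_max_iff.mp (hineq r hr hrε) with hx | hx
  · exact hx.trans (mul_le_mul_of_nonneg_right hAC ht)
  · rw [Real.two_mul_rpow hr.le] at h2r
    exact le_mul_of_le_doubling_recursion hκ.1 hq.le (hA.trans hAC) ht
      ((div_le_iff₀ hden).mp hBC) h2r hx

/-- The inductive step for iterating the functional inequality for the
modulus of continuity: if `ω(2r) ≤ C₄ (2r)^α`, then `ω(r) ≤ C₄ r^α`, provided
`C₄ ≥ max { A, B / ((1 - 2^{α-1}) κ) }`. -/
theorem stmt_4
    (α κ A B ε₀ C₄ : ℝ) (ω : ℝ → ℝ)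
    (hα : α ∈ Set.Ioo (0:ℝ) 1) (hκ : κ ∈ Set.Ioc (0:ℝ) (1/2))
    (hA : 0 ≤ A) (hB : 0 ≤ B) (hε₀ : 0 < ε₀)
    (hωnn : ∀ r : ℝ, 0 < r → 0 ≤ ω r)
    (hωbd : ∃ M : ℝ, ∀ r : ℝ, 0 < r → ω r ≤ M)
    (hineq : ∀ r : ℝ, 0 < r → r ≤ ε₀ →
      ω r ≤ max (A * r ^ α) (B * r ^ α + κ * ω (2 * r) + (1 - 2 * κ) * ω r))
    (hC₄ : max A (B / ((1 - 2 ^ (α - 1)) * κ)) ≤ C₄) :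
    ∀ r : ℝ, 0 < r → r ≤ ε₀ → ω (2 * r) ≤ C₄ * (2 * r) ^ α → ω r ≤ C₄ * r ^ α :=
  stmt_4_general α κ A B ε₀ C₄ ω hα hκ hA hineq hC₄
end

section
/- Let α ∈ (0,1), κ ∈ (0, 1/2], A ≥ 0, B ≥ 0, 0 < ε₀ ≤ D, M ≥ 0, and let ω : (0, D] → [0, ∞) be a nondecreasing function with ω ≤ M satisfying ω(r) ≤ max{ A r^α , B r^α + κ ω(2r) + (1 − 2κ) ω(r) } for every r ∈ (0, ε₀]. Then there exists a constant C > 0, depending only on α, κ, A, B, M, ε₀ and D, such that ω(r) ≤ C r^α for all r ∈ (0, D]. -/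
/-!
In the second branch of the maximum the term `(1 - 2κ) ω(r)` can be absorbed on the left,
so in both branches `ω(r) ≤ K r^α + ω(2r)/2` with `K = max A (B / 2κ)`. Since `2^α < 2`,
the bound `ω ≤ C r^α` is then inherited from scale `2r` to scale `r` as soon as
`K + C 2^α / 2 ≤ C`; starting from `ω ≤ M` above `ε₀ / 2`, it propagates down the dyadic
scales `ε₀ / 2^(n+1)` to all of `(0, D]`.
-/

open Real

lemma le_max_mul_add_half {κ A B s x y : ℝ} (hκ : 0 < κ) (hs : 0 ≤ s) (hy : 0 ≤ y)
    (h : x ≤ max (A * s) (B * s + κ * y + (1 - 2 * κ) * x)) :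
    x ≤ max A (B / (2 * κ)) * s + y / 2 := by
  rcases le_max_iff.mp h with h | h
  · nlinarith [mul_le_mul_of_nonneg_right (le_max_left A (B / (2 * κ))) hs]
  · have h2κ : B / (2 * κ) * (2 * κ) = B := div_mul_cancel₀ B (by positivity)
    nlinarith [mul_le_mul_of_nonneg_right (le_max_right A (B / (2 * κ))) hs]

section DyadicIteration

variable {ω : ℝ → ℝ} {α K C ρ D : ℝ}

theorem le_mul_rpow_of_div_two_pow_lt (h2ρ : 2 * ρ ≤ D) (hC : K + C * 2 ^ α / 2 ≤ C)
    (hstep : ∀ r, 0 < r → r ≤ ρ → ω r ≤ K * r ^ α + ω (2 * r) / 2)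
    (hbase : ∀ r, ρ < r → r ≤ D → ω r ≤ C * r ^ α) (n : ℕ) :
    ∀ r, 0 < r → ρ / 2 ^ n < r → r ≤ D → ω r ≤ C * r ^ α := by
  induction n with
  | zero => simpa using fun r _ ↦ hbase r
  | succ n ih =>
    intro r hr hρr hrD
    rcases lt_or_ge ρ r with hρr' | hrρ
    · exact hbase r hρr' hrD
    have h2r : ρ / 2 ^ n < 2 * r := by
      rw [pow_succ, ← div_div] at hρr
      linarith
    have hr2 := ih (2 * r) (by positivity) h2r (by linarith)
    rw [mul_rpow zero_le_two hr.le] at hr2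
    calc ω r ≤ K * r ^ α + C * (2 ^ α * r ^ α) / 2 := by linarith [hstep r hr hrρ]
      _ = (K + C * 2 ^ α / 2) * r ^ α := by ring
      _ ≤ C * r ^ α := by gcongr

theorem le_mul_rpow_of_le_add_half (h2ρ : 2 * ρ ≤ D) (hC : K + C * 2 ^ α / 2 ≤ C)
    (hstep : ∀ r, 0 < r → r ≤ ρ → ω r ≤ K * r ^ α + ω (2 * r) / 2)
    (hbase : ∀ r, ρ < r → r ≤ D → ω r ≤ C * r ^ α) :
    ∀ r, 0 < r → r ≤ D → ω r ≤ C * r ^ α := by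
  intro r hr hrD
  obtain ⟨n, hn⟩ := pow_unbounded_of_one_lt (ρ / r) one_lt_two
  refine le_mul_rpow_of_div_two_pow_lt h2ρ hC hstep hbase n r hr ?_ hrD
  rw [div_lt_iff₀ hr] at hn
  rw [div_lt_iff₀ (by positivity)]
  linarith

end DyadicIteration

theorem add_mul_two_rpow_half_le {α K C : ℝ} (hα : α < 1) (hC : K / (1 - 2 ^ α / 2) ≤ C) :
    K + C * 2 ^ α / 2 ≤ C := by
  have h2α : (2 : ℝ) ^ α < 2 ^ (1 : ℝ) := rpow_lt_rpow_of_exponent_lt one_lt_two hα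
  rw [rpow_one] at h2α
  rw [div_le_iff₀ (by linarith)] at hC
  linarith

theorem stmt_5_general
    (α κ A B ε₀ D M : ℝ) (ω : ℝ → ℝ)
    (hα : α ∈ Set.Ioo (0:ℝ) 1) (hκ : κ ∈ Set.Ioc (0:ℝ) (1/2))
    (hε₀ : 0 < ε₀) (hε₀D : ε₀ ≤ D)
    (hωnn : ∀ r : ℝ, 0 < r → r ≤ D → 0 ≤ ω r)
    (hωM : ∀ r : ℝ, 0 < r → r ≤ D → ω r ≤ M)
    (hineq : ∀ r : ℝ, 0 < r → r ≤ ε₀ →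
      ω r ≤ max (A * r ^ α) (B * r ^ α + κ * ω (2 * r) + (1 - 2 * κ) * ω r)) :
    ∃ C > 0, ∀ r : ℝ, 0 < r → r ≤ D → ω r ≤ C * r ^ α := by
  set K := max A (B / (2 * κ))
  set C := max (max (M / (ε₀ / 2) ^ α) (K / (1 - 2 ^ α / 2))) 1
  have hε₀α : 0 < (ε₀ / 2) ^ α := by positivity
  refine ⟨C, by positivity, le_mul_rpow_of_le_add_half (ρ := ε₀ / 2) (K := K) (by linarith)
    (add_mul_two_rpow_half_le hα.2 (le_max_of_le_left (le_max_right _ _))) ?_ ?_⟩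
  · intro r hr hrρ
    exact le_max_mul_add_half hκ.1 (by positivity) (hωnn (2 * r) (by positivity) (by linarith))
      (hineq r hr (by linarith))
  · intro r hρr hrD
    have hr : 0 < r := by linarith
    calc ω r ≤ M / (ε₀ / 2) ^ α * (ε₀ / 2) ^ α := by
          rw [div_mul_cancel₀ _ hε₀α.ne']; exact hωM r hr hrD
      _ ≤ C * r ^ α := by
          gcongr
          · exact le_max_of_le_left (le_max_left _ _)
          · exact hα.1.le

/-- The iterated (dyadic) form of the functional inequality: a bounded
nondecreasing function `ω` on `(0, D]` satisfying
`ω(r) ≤ max { A r^α , B r^α + κ ω(2r) + (1 - 2κ) ω(r) }` for `r ∈ (0, ε₀]`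
obeys a global Hölder bound `ω(r) ≤ C r^α` on `(0, D]`. -/
theorem stmt_5
    (α κ A B ε₀ D M : ℝ) (ω : ℝ → ℝ)
    (hα : α ∈ Set.Ioo (0:ℝ) 1) (hκ : κ ∈ Set.Ioc (0:ℝ) (1/2))
    (hA : 0 ≤ A) (hB : 0 ≤ B) (hε₀ : 0 < ε₀) (hε₀D : ε₀ ≤ D) (hM : 0 ≤ M)
    (hωnn : ∀ r : ℝ, 0 < r → r ≤ D → 0 ≤ ω r)
    (hωmono : ∀ r s : ℝ, 0 < r → r ≤ s → s ≤ D → ω r ≤ ω s)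
    (hωM : ∀ r : ℝ, 0 < r → r ≤ D → ω r ≤ M)
    (hineq : ∀ r : ℝ, 0 < r → r ≤ ε₀ →
      ω r ≤ max (A * r ^ α) (B * r ^ α + κ * ω (2 * r) + (1 - 2 * κ) * ω r)) :
    ∃ C > 0, ∀ r : ℝ, 0 < r → r ≤ D → ω r ≤ C * r ^ α :=
  stmt_5_general α κ A B ε₀ D M ω hα hκ hε₀ hε₀D hωnn hωM hineq
end

section
/- Let Ω ⊂ ℂⁿ be a bounded domain with 0 ∈ ∂Ω which is strictly pseudoconvex near 0 in the following sense: there exist r₁ > 0 and a function f ∈ C^∞(ℂⁿ, ℝ) with f(0) = 0 such that Ω ∩ B_{r₁}(0) = { z ∈ B_{r₁}(0) : f(z) < 0 } and the complex Hessian matrix (∂²f/∂z_i ∂z̄_j (z))_{i,j} is positive definite for all z in some neighborhood of 0. Then there exist a function ρ ∈ C^∞(ℂⁿ, ℝ) and a radius r₀ > 0 such that: (1) ρ(0) = 0 and ρ(z) ≥ |z|² for all z ∈ Ω ∩ B_{r₀}(0); (2) −ρ is plurisubharmonic on ℂⁿ, i.e., for all a, w ∈ ℂⁿ one has Σ_{i,j}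 (∂²(−ρ)/∂z_i ∂z̄_j)(a) w_i \bar{w}_j ≥ 0. -/
open Metric

/-- The Levi form (complex Hessian) of a real-valued `C²` function on `ℂⁿ`, evaluated at the
point `a` in the complex direction `w`:
`Σ_{i,j} (∂²f/∂z_i ∂z̄_j)(a) w_i w̄_j = (1/4) (D²f(a)(w,w) + D²f(a)(i·w, i·w))`,
where `D²f` denotes the real second (Fréchet) derivative. For a real-valued `f` this real
number equals the complex Hessian applied to `(w, w̄)`, and `f` is plurisubharmonic iff its
Levi form is nonnegative everywhere. -/
noncomputable def leviForm {n : ℕ} (f : EuclideanSpace ℂ (Fin n) → ℝ)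
    (a w : EuclideanSpace ℂ (Fin n)) : ℝ :=
  (iteratedFDeriv ℝ 2 f a ![w, w] +
      iteratedFDeriv ℝ 2 f a ![(Complex.I : ℂ) • w, (Complex.I : ℂ) • w]) / 4

noncomputable abbrev EE (n : ℕ) := EuclideanSpace ℂ (Fin n)

noncomputable def Jmap (n : ℕ) : EE n →L[ℝ] EE n :=
  ((Complex.I : ℂ) • ContinuousLinearMap.id ℂ (EE n)).restrictScalars ℝ

variable {n : ℕ}

lemma Jmap_apply (z : EE n) : Jmap n z = (Complex.I : ℂ) • z := by simp [Jmap]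

lemma Jmap_Jmap (z : EE n) : Jmap n (Jmap n z) = -z := by
  simp [Jmap, smul_smul, Complex.I_mul_I]

noncomputable def rhoFun (Bb : EE n →L[ℝ] EE n →L[ℝ] ℝ) (T : EE n →L[ℝ] ℝ) (k : ℝ) :
    EE n → ℝ :=
  fun z => k * (T z + (Bb z z - Bb (Jmap n z) (Jmap n z)) * (1/4))

noncomputable def C2 (Bb : EE n →L[ℝ] EE n →L[ℝ] ℝ) : EE n →L[ℝ] EE n →L[ℝ] ℝ :=
  (((Bb.comp (Jmap n)).flip.comp (Jmap n)).flip)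

lemma C2_apply (Bb : EE n →L[ℝ] EE n →L[ℝ] ℝ) (u v : EE n) :
    C2 Bb u v = Bb (Jmap n u) (Jmap n v) := by
  simp [C2]

noncomputable def Dl (Bb : EE n →L[ℝ] EE n →L[ℝ] ℝ) (k : ℝ) :
    EE n →L[ℝ] EE n →L[ℝ] ℝ :=
  (k / 4) • (Bb + Bb.flip - C2 Bb - (C2 Bb).flip)

lemma rho_hasFDerivAt (Bb : EE n →L[ℝ] EE n →L[ℝ] ℝ) (T : EE n →L[ℝ] ℝ) (k : ℝ) (a : EE n) :
    HasFDerivAt (rhoFun Bb T k) (k • T + Dl Bb k a) a := by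
  have h1 : HasFDerivAt (fun z : EE n => Bb z z)
      ((Bb a).comp (ContinuousLinearMap.id ℝ (EE n)) + Bb.flip a) a :=
    Bb.hasFDerivAt.clm_apply (hasFDerivAt_id a)
  have h2 : HasFDerivAt (fun z : EE n => Bb (Jmap n z) (Jmap n z))
      ((Bb (Jmap n a)).comp (Jmap n) + (Bb.comp (Jmap n)).flip (Jmap n a)) a :=
    (Bb.comp (Jmap n)).hasFDerivAt.clm_apply (Jmap n).hasFDerivAt
  have h := ((T.hasFDerivAt.add ((h1.sub h2).mul_const (1/4))).const_mul k)
  refine h.congr_fderiv ?_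
  ext u
  simp [Dl, C2]
  ring

lemma rho_contDiff (Bb : EE n →L[ℝ] EE n →L[ℝ] ℝ) (T : EE n →L[ℝ] ℝ) (k : ℝ) :
    ContDiff ℝ (⊤ : ℕ∞) (rhoFun Bb T k) := by
  have hq : ContDiff ℝ (⊤ : ℕ∞) (fun z : EE n => Bb z z) :=
    (Bb.contDiff).clm_apply contDiff_id
  have hq2 : ContDiff ℝ (⊤ : ℕ∞) (fun z : EE n => Bb (Jmap n z) (Jmap n z)) :=
    ((Bb.comp (Jmap n)).contDiff).clm_apply (Jmap n).contDiff
  exact contDiff_const.mul ((T.contDiff).add ((hq.sub hq2).mul contDiff_const))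

lemma rho_fderiv (Bb : EE n →L[ℝ] EE n →L[ℝ] ℝ) (T : EE n →L[ℝ] ℝ) (k : ℝ) :
    fderiv ℝ (rhoFun Bb T k) = fun a => k • T + Dl Bb k a := by
  funext a
  exact (rho_hasFDerivAt Bb T k a).fderiv

lemma rho_second (Bb : EE n →L[ℝ] EE n →L[ℝ] ℝ) (T : EE n →L[ℝ] ℝ) (k : ℝ) (a : EE n) :
    fderiv ℝ (fderiv ℝ (rhoFun Bb T k)) a = Dl Bb k := by
  rw [rho_fderiv]
  have h : HasFDerivAt (fun a : EE n => k • T + Dl Bb k a) (0 + Dl Bb k) a :=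
    (hasFDerivAt_const (k • T) a).add (Dl Bb k).hasFDerivAt
  simpa using h.fderiv

lemma leviForm_eq (g : EE n → ℝ) (a w : EE n) :
    leviForm g a w = (fderiv ℝ (fderiv ℝ g) a w w
      + fderiv ℝ (fderiv ℝ g) a (Jmap n w) (Jmap n w)) / 4 := by
  simp [leviForm, iteratedFDeriv_two_apply, Jmap_apply]

lemma levi_rho_zero (Bb : EE n →L[ℝ] EE n →L[ℝ] ℝ) (T : EE n →L[ℝ] ℝ) (k : ℝ) (a w : EE n) :
    leviForm (rhoFun Bb T k) a w = 0 := by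
  rw [leviForm_eq, rho_second]
  simp [Dl, C2_apply, Jmap_Jmap]
  ring

lemma taylor2 (f : EE n → ℝ) (hf : ContDiff ℝ (⊤ : ℕ∞) f) (z : EE n) :
    ∃ ξ ∈ Set.Ioo (0:ℝ) 1,
      f z = f 0 + fderiv ℝ f 0 z + fderiv ℝ (fderiv ℝ f) (ξ • z) z z / 2 := by
  set s : Set ℝ := Set.Icc 0 1 with hs
  have husd : UniqueDiffOn ℝ s := uniqueDiffOn_Icc one_pos
  set g : ℝ → ℝ := fun t => f (t • z) with hgdef
  have hsm : ∀ t : ℝ, HasDerivAt (fun t : ℝ => t • z) z t := by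
    intro t
    simpa using (hasDerivAt_id t).smul_const z
  have hg : ContDiff ℝ (⊤ : ℕ∞) g := hf.comp (contDiff_id.smul contDiff_const)
  have hder : ∀ t : ℝ, HasDerivAt g (fderiv ℝ f (t • z) z) t := fun t =>
    (hf.differentiable (by simp) (t • z)).hasFDerivAt.comp_hasDerivAt t (hsm t)
  have hf' : ContDiff ℝ (⊤ : ℕ∞) (fderiv ℝ f) := hf.fderiv_right (le_of_eq rfl)
  set G1 : ℝ → ℝ := fun t => fderiv ℝ f (t • z) z with hG1def
  have hder2 : ∀ t : ℝ, HasDerivAt G1 (fderiv ℝ (fderiv ℝ f) (t • z) z z) t := by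
    intro t
    have h1 : HasDerivAt (fun t : ℝ => fderiv ℝ f (t • z))
        (fderiv ℝ (fderiv ℝ f) (t • z) z) t :=
      (hf'.differentiable (by simp) (t • z)).hasFDerivAt.comp_hasDerivAt t (hsm t)
    simpa using h1.clm_apply (hasDerivAt_const t z)
  have heq1 : ∀ y ∈ s, iteratedDerivWithin 1 g s y = G1 y := by
    intro y hy
    rw [iteratedDerivWithin_one,
      (hder y).differentiableAt.derivWithin (husd y hy)]
    exact (hder y).deriv
  have hdiff : DifferentiableOn ℝ (iteratedDerivWithin 1 g s) (Set.Ioo 0 1) := by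
    intro y hy
    refine ((hder2 y).differentiableAt.differentiableWithinAt).congr
      (fun x hx => heq1 x (Set.Ioo_subset_Icc_self hx))
      (heq1 y (Set.Ioo_subset_Icc_self hy))
  have hu1 : Set.uIcc (0:ℝ) 1 = s := Set.uIcc_of_le zero_le_one
  have hu2 : Set.uIoo (0:ℝ) 1 = Set.Ioo 0 1 := Set.uIoo_of_le zero_le_one
  obtain ⟨ξ, hξ, htay⟩ := taylor_mean_remainder_lagrange (f := g) (x₀ := 0) (x := 1)
    one_pos.ne ((hg.of_le (by exact_mod_cast le_top)).contDiffOn) (by rw [hu1, hu2]; exact hdiff)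
  rw [hu2] at hξ
  rw [hu1] at htay
  refine ⟨ξ, hξ, ?_⟩
  have h2 : iteratedDerivWithin 2 g s ξ = fderiv ℝ (fderiv ℝ f) (ξ • z) z z := by
    rw [show (2:ℕ) = 1 + 1 from rfl, iteratedDerivWithin_succ,
      derivWithin_congr heq1 (heq1 ξ (Set.Ioo_subset_Icc_self hξ)),
      (hder2 ξ).differentiableAt.derivWithin (husd ξ (Set.Ioo_subset_Icc_self hξ))]
    exact (hder2 ξ).deriv
  have h3 : taylorWithinEval g 1 s 0 1 = g 0 + derivWithin g s 0 := by
    rw [taylor_within_apply]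
    simp [Finset.sum_range_succ, iteratedDerivWithin_one]
  have h4 : derivWithin g s 0 = fderiv ℝ f 0 z := by
    rw [(hder 0).differentiableAt.derivWithin (husd 0 (Set.left_mem_Icc.mpr zero_le_one))]
    have := (hder 0).deriv
    simpa using this
  have hg1 : g 1 = f z := by simp [hgdef]
  have hg0 : g 0 = f 0 := by simp [hgdef]
  rw [h3, h4, h2, hg1, hg0] at htay
  norm_num at htay
  linarith

lemma opnorm_dev (M B : EE n →L[ℝ] EE n →L[ℝ] ℝ) (z : EE n) {c : ℝ} (h : ‖M - B‖ ≤ c) :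
    B z z - c * ‖z‖ ^ 2 ≤ M z z := by
  have h1 : ‖((M - B) z) z‖ ≤ ‖M - B‖ * ‖z‖ * ‖z‖ := (M - B).le_opNorm₂ z z
  have h2 : ((M - B) z) z = M z z - B z z := by simp
  rw [h2, Real.norm_eq_abs] at h1
  have h3 : ‖M - B‖ * ‖z‖ * ‖z‖ ≤ c * ‖z‖ ^ 2 := by nlinarith [norm_nonneg z, norm_nonneg (M - B)]
  have := abs_le.mp (h1.trans h3)
  linarith

lemma cont_near (G : EE n → (EE n →L[ℝ] EE n →L[ℝ] ℝ)) (hGc : Continuous G)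
    {c : ℝ} (hc : 0 < c) :
    ∃ r > 0, ∀ a : EE n, ‖a‖ < r → ‖G a - G 0‖ ≤ c := by
  have h2' : Filter.Tendsto (fun a => ‖G a - G 0‖) (nhds 0) (nhds ‖G (0 : EE n) - G 0‖) := by
    have h00 : G 0 - G 0 = 0 := by ext x y; simp
    rw [h00, ContinuousLinearMap.opNorm_zero]
    exact (@tendsto_iff_norm_sub_tendsto_zero _ _ _ G (nhds 0) (G 0)).mp (hGc.tendsto 0)
  have heq : ‖G (0 : EE n) - G 0‖ = 0 := by
    have : G 0 - G 0 = 0 := by ext x y; simp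
    rw [this]; exact ContinuousLinearMap.opNorm_zero
  rw [heq] at h2'
  have h2 : ∀ᶠ a : EE n in nhds 0, ‖G a - G 0‖ < c := (tendsto_order.mp h2').2 c hc
  obtain ⟨r, hr, h3⟩ := Metric.eventually_nhds_iff_ball.mp h2
  exact ⟨r, hr, fun a ha => le_of_lt (h3 a (mem_ball_zero_iff.mpr ha))⟩

set_option maxHeartbeats 1000000 in
/-- For a bounded domain `Ω ⊂ ℂⁿ` with `0 ∈ ∂Ω` which is strictly
pseudoconvex near `0` (defined near `0` by a smooth function `f` whose complex Hessian is
positive definite near `0`), there are a smooth function `ρ` and `r₀ > 0` with `ρ(0) = 0`,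
`ρ(z) ≥ |z|²` on `Ω ∩ B_{r₀}(0)`, and `-ρ` plurisubharmonic on all of `ℂⁿ`. -/
theorem stmt_6
    (n : ℕ) (Ω : Set (EuclideanSpace ℂ (Fin n)))
    (hΩo : IsOpen Ω) (hΩb : Bornology.IsBounded Ω) (hΩc : IsConnected Ω)
    (h0 : (0 : EuclideanSpace ℂ (Fin n)) ∈ frontier Ω)
    (r₁ : ℝ) (hr₁ : 0 < r₁)
    (f : EuclideanSpace ℂ (Fin n) → ℝ) (hf : ContDiff ℝ (⊤ : ℕ∞) f) (hf0 : f 0 = 0)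
    (hΩf : Ω ∩ ball 0 r₁ = {z ∈ ball (0 : EuclideanSpace ℂ (Fin n)) r₁ | f z < 0})
    (hspsc : ∃ V ∈ nhds (0 : EuclideanSpace ℂ (Fin n)),
      ∀ z ∈ V, ∀ w : EuclideanSpace ℂ (Fin n), w ≠ 0 → 0 < leviForm f z w) :
    ∃ (ρ : EuclideanSpace ℂ (Fin n) → ℝ) (r₀ : ℝ), 0 < r₀ ∧ ContDiff ℝ (⊤ : ℕ∞) ρ ∧ ρ 0 = 0 ∧
      (∀ z ∈ Ω ∩ ball 0 r₀, ‖z‖ ^ 2 ≤ ρ z) ∧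
      (∀ a w : EuclideanSpace ℂ (Fin n), 0 ≤ leviForm (fun z => -ρ z) a w) := by
  rcases subsingleton_or_nontrivial (EE n) with hsub | hnt
  · -- degenerate case: the space is trivial, so the frontier is empty
    exfalso
    rcases Set.eq_empty_or_nonempty Ω with h | ⟨x, hx⟩
    · rw [h] at h0; simp at h0
    · have : Ω = Set.univ := Set.eq_univ_iff_forall.mpr fun y => (Subsingleton.elim x y) ▸ hx
      rw [this] at h0; simp at h0
  set T : EE n →L[ℝ] ℝ := fderiv ℝ f 0 with hT
  have hf' : ContDiff ℝ (⊤ : ℕ∞) (fderiv ℝ f) := hf.fderiv_right (le_of_eq rfl)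
  set G : EE n → (EE n →L[ℝ] EE n →L[ℝ] ℝ) := fderiv ℝ (fderiv ℝ f) with hG
  set Bb : EE n →L[ℝ] EE n →L[ℝ] ℝ := G 0 with hBb
  set L : EE n → ℝ := fun w => (Bb w w + Bb (Jmap n w) (Jmap n w)) / 4 with hL
  -- positivity of the Levi form at the origin
  obtain ⟨V, hV, hposV⟩ := hspsc
  have hLpos : ∀ w : EE n, w ≠ 0 → 0 < L w := by
    intro w hw
    have := hposV 0 (mem_of_mem_nhds hV) w hw
    rwa [leviForm_eq] at this
  have hLcont : Continuous L := by
    have h1 : Continuous (fun w : EE n => Bb w w) :=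
      ((Bb.contDiff (n := (⊤ : ℕ∞))).clm_apply contDiff_id).continuous
    have h2 : Continuous (fun w : EE n => Bb (Jmap n w) (Jmap n w)) :=
      (((Bb.comp (Jmap n)).contDiff (n := (⊤ : ℕ∞))).clm_apply (Jmap n).contDiff).continuous
    exact (h1.add h2).div_const 4
  -- a positive lower bound on the sphere
  obtain ⟨x₀, hx₀⟩ := exists_norm_eq (EE n) (zero_le_one)
  have hsphne : (sphere (0 : EE n) 1).Nonempty := ⟨x₀, by simpa using hx₀⟩
  obtain ⟨xm, hxm, hmin'⟩ := (isCompact_sphere (0 : EE n) 1).exists_isMinOn hsphne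
    hLcont.continuousOn
  have hmin : ∀ y ∈ sphere (0 : EE n) 1, L xm ≤ L y := fun y hy => hmin' hy
  set c : ℝ := L xm with hc
  have hxmnorm : ‖xm‖ = 1 := by simpa using hxm
  have hcpos : 0 < c := hLpos xm (by intro h; rw [h] at hxmnorm; simp at hxmnorm)
  have hscale : ∀ z : EE n, c * ‖z‖ ^ 2 ≤ L z := by
    intro z
    rcases eq_or_ne z 0 with rfl | hz
    · simp [hL]
    · have hsc : ∀ (t : ℝ) (v : EE n), L (t • v) = t ^ 2 * L v := by
        intro t v
        simp only [hL, map_smul, ContinuousLinearMap.smul_apply, smul_eq_mul]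
        ring
      set u : EE n := (‖z‖⁻¹ : ℝ) • z with hu
      have hzn : ‖z‖ ≠ 0 := norm_ne_zero_iff.mpr hz
      have hun : ‖u‖ = 1 := by
        rw [hu, norm_smul]
        simp [abs_of_nonneg (inv_nonneg.mpr (norm_nonneg z)), inv_mul_cancel₀ hzn]
      have hzu : ((‖z‖ : ℝ) • u) = z := by
        rw [hu, smul_smul, mul_inv_cancel₀ hzn, one_smul]
      have h2 : c ≤ L u := hmin u (by simpa using hun)
      have h1 : L z = ‖z‖ ^ 2 * L u := by rw [← hsc ‖z‖ u, hzu]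
      have h3 := mul_le_mul_of_nonneg_left h2 (sq_nonneg ‖z‖)
      rw [h1]
      linarith
  -- continuity of the second derivative near 0
  have hGc : Continuous G := (hf'.fderiv_right (m := (⊤ : ℕ∞)) (le_of_eq rfl)).continuous
  obtain ⟨r₂, hr₂, hGnear⟩ := cont_near G hGc hcpos
  -- the candidate function and radius
  set k : ℝ := -(2 / c) with hk
  set ρ : EE n → ℝ := rhoFun Bb T k with hρ
  set r₀ : ℝ := min r₁ r₂ with hr₀
  refine ⟨ρ, r₀, lt_min hr₁ hr₂, ?_, ?_, ?_, ?_⟩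
  · rw [hρ]; exact rho_contDiff Bb T k
  · rw [hρ]; simp [rhoFun]
  · -- growth estimate
    rintro z ⟨hzΩ, hzb⟩
    have hzr₁ : z ∈ ball (0 : EE n) r₁ :=
      mem_ball.mpr (lt_of_lt_of_le (mem_ball.mp hzb) (min_le_left _ _))
    have hzr₂ : ‖z‖ < r₂ := by
      have := lt_of_lt_of_le (mem_ball.mp hzb) (min_le_right _ _)
      rwa [dist_zero_right] at this
    have hfz : f z < 0 := by
      have hmem : z ∈ Ω ∩ ball 0 r₁ := ⟨hzΩ, hzr₁⟩
      rw [hΩf] at hmem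
      exact hmem.2
    obtain ⟨ξ, hξ, htay⟩ := taylor2 f hf z
    rw [← hT, ← hG, hf0] at htay
    have hξz : ‖ξ • z‖ < r₂ := by
      rw [norm_smul]
      calc ‖ξ‖ * ‖z‖ ≤ 1 * ‖z‖ := by
            apply mul_le_mul_of_nonneg_right _ (norm_nonneg z)
            rw [Real.norm_eq_abs, abs_of_pos hξ.1]
            exact le_of_lt hξ.2
        _ = ‖z‖ := one_mul _
        _ < r₂ := hzr₂
    have hdev : ‖G (ξ • z) - G 0‖ ≤ c := hGnear (ξ • z) hξz
    have hGb : G 0 z z - c * ‖z‖ ^ 2 ≤ G (ξ • z) z z := opnorm_dev _ _ z hdev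
    rw [← hBb] at hGb
    have hLdef : L z = (Bb z z + Bb (Jmap n z) (Jmap n z)) / 4 := by rw [hL]
    have hLz := hscale z
    have hρz : ρ z = -(2 / c) * (T z + (Bb z z - Bb (Jmap n z) (Jmap n z)) * (1/4)) := by
      rw [hρ, ← hk]; rfl
    have hkey : T z + (Bb z z - Bb (Jmap n z) (Jmap n z)) * (1/4) ≤ -(c/2) * ‖z‖ ^ 2 := by
      linarith
    have h2c : (0:ℝ) < 2 / c := by positivity
    have hmul := mul_le_mul_of_nonneg_left hkey (le_of_lt h2c)
    have hcs : (2 / c) * (-(c/2) * ‖z‖ ^ 2) = -‖z‖ ^ 2 := by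
      field_simp
    rw [hρz]
    rw [hcs] at hmul
    linarith
  · -- plurisubharmonicity
    intro a w
    have hneg : (fun z => -ρ z) = rhoFun Bb T (-k) := by
      funext z
      rw [hρ]
      simp only [rhoFun]
      ring
    rw [hneg, levi_rho_zero]
end

section
/- Let Ω ⊂ ℝ^m be a bounded domain and let u ∈ C(Ω̄). Assume: (i) u satisfies the sub-mean value property: u(x) ≤ ⨍_{B_t(x)} u dμ whenever x ∈ Ω, t > 0 and B_t(x) ⊂ Ω; (ii) there are C₁ > 0 and β ∈ (0,1] with |u(x) − u(y)| ≤ C₁ |x − y|^β for all x ∈ Ω and y ∈ ∂Ω; (iii) there are C₀ > 0 and ε₀ > 0 with μ(Ω \ Ω_{2ε}) ≤ C₀ ε for all ε ∈ (0, ε₀]. Then there exists a constant C > 0, depending only on C₀, C₁, β and m, such that for all ε ∈ (0, ε₀], ∫_{Ω_ε} (û_ε(x) − u(x)) dμ(x) ≤ C ε^{1+β}; in particular, since û_ε − u ≥ 0 on Ω_ε by (i), ‖û_ε − u‖_{L¹(Ω_ε)} ≤ C ε^{1+β}. -/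
/-!
Write `A = Ω_ε` and `S = Ω \ Ω_ε`. After multiplication by `|B_ε|`, the integral of `û_ε - u` over
`A` is the double integral of `u y - u x` over the pairs `x ∈ A`, `y ∈ Ω` with `|x - y| < ε`. The
pairs with both points in `A` contribute nothing: the region is symmetric and the integrand
antisymmetric. In a remaining pair, `y ∈ S` lies within `ε` of `∂Ω`, so both points lie within `2ε`
of one boundary point and the Hölder bound gives `u y - u x ≤ 2 C₁ (2ε)^β`; these pairs have
measure at most `|S| |B_ε| ≤ C₀ (ε / 2) |B_ε|`.
-/

open MeasureTheory Metric

open scoped ENNReal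

section MeasureSpace

variable {α : Type*} [MeasurableSpace α] {μ : Measure α}

theorem measureReal_mul_setAverage_sub {s : Set α} {f : α → ℝ} (hf : IntegrableOn f s μ)
    (hs : μ s ≠ ∞) (x : α) :
    μ.real s * ((⨍ y in s, f y ∂μ) - f x) = ∫ y in s, (f y - f x) ∂μ := by
  rcases eq_or_ne (μ s) 0 with h0 | h0
  · simp [Measure.real, h0, Measure.restrict_eq_zero.2 h0]
  have hpos : 0 < μ.real s := ENNReal.toReal_pos h0 hs
  rw [integral_sub hf (integrableOn_const hs), setIntegral_const, setAverage_eq, smul_eq_mul,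
    smul_eq_mul]
  field_simp

theorem setIntegral_prod_eq_zero_of_antisymm [SFinite μ] {W : Set (α × α)}
    (hW : Prod.swap ⁻¹' W = W) {g : α × α → ℝ} (hg : ∀ p, g p.swap = -g p) :
    ∫ p in W, g p ∂μ.prod μ = 0 := by
  have h := (Measure.measurePreserving_swap (μ := μ) (ν := μ)).setIntegral_preimage_emb
    MeasurableEquiv.prodComm.measurableEmbedding g W
  simp only [hW, hg, integral_neg] at h
  linarith

theorem integrableOn_prod_sub [SFinite μ] {s : Set α} {f : α → ℝ} (hf : IntegrableOn f s μ)
    (hs : μ s ≠ ∞) : IntegrableOn (fun p : α × α ↦ f p.2 - f p.1) (s ×ˢ s) (μ.prod μ) := by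
  have : IsFiniteMeasure (μ.restrict s) := ⟨by simpa using hs.lt_top⟩
  rw [IntegrableOn, ← Measure.prod_restrict]
  exact (hf.comp_snd _).sub (hf.comp_fst _)

end MeasureSpace

section MetricMeasureSpace

variable {α : Type*} [PseudoMetricSpace α] [SecondCountableTopology α] [MeasurableSpace α]
  [OpensMeasurableSpace α] {μ : Measure α} [SFinite μ]

theorem measurableSet_dist_lt (ε : ℝ) : MeasurableSet {p : α × α | dist p.1 p.2 < ε} :=
  measurableSet_lt (measurable_fst.dist measurable_snd) measurable_const

theorem measure_prod_inter_dist_lt_le {c : ℝ≥0∞} {ε : ℝ} (hc : ∀ y, μ (ball y ε) ≤ c)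
    (s : Set α) {t : Set α} (ht : MeasurableSet t) :
    μ.prod μ (s ×ˢ t ∩ {p | dist p.1 p.2 < ε}) ≤ μ t * c := by
  calc μ.prod μ (s ×ˢ t ∩ {p | dist p.1 p.2 < ε})
      ≤ μ.prod μ (Set.univ ×ˢ t ∩ {p | dist p.1 p.2 < ε}) := by gcongr; exact Set.subset_univ _
    _ = ∫⁻ y, μ ((fun x ↦ (x, y)) ⁻¹' (Set.univ ×ˢ t ∩ {p | dist p.1 p.2 < ε})) ∂μ :=
        Measure.prod_apply_symm ((MeasurableSet.univ.prod ht).inter (measurableSet_dist_lt ε))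
    _ ≤ ∫⁻ y, t.indicator (fun _ ↦ c) y ∂μ := by
        refine lintegral_mono fun y ↦ ?_
        by_cases hy : y ∈ t
        · simpa [hy, Set.preimage, ball] using hc y
        · simp [hy, Set.preimage]
    _ = μ t * c := by rw [lintegral_indicator_const ht, mul_comm]

theorem mul_setIntegral_setAverage_ball_sub {Ω A : Set α} {f : α → ℝ} {ε c : ℝ}
    (hΩ : μ Ω ≠ ∞) (hA : MeasurableSet A) (hAΩ : A ⊆ Ω) (hf : IntegrableOn f Ω μ)
    (hball : ∀ x ∈ A, ball x ε ⊆ Ω) (hc : ∀ x, μ.real (ball x ε) = c) :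
    c * ∫ x in A, ((⨍ y in ball x ε, f y ∂μ) - f x) ∂μ =
      ∫ p in A ×ˢ Ω ∩ {p | dist p.1 p.2 < ε}, (f p.2 - f p.1) ∂μ.prod μ := by
  set N : Set (α × α) := {p | dist p.1 p.2 < ε}
  set g : α × α → ℝ := fun p ↦ f p.2 - f p.1
  calc c * ∫ x in A, ((⨍ y in ball x ε, f y ∂μ) - f x) ∂μ
      = ∫ x in A, ∫ y in ball x ε, (f y - f x) ∂μ ∂μ := by
        rw [← integral_const_mul]
        refine setIntegral_congr_fun hA fun x hx ↦ ?_
        rw [← hc x]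
        exact measureReal_mul_setAverage_sub (hf.mono_set (hball x hx))
          (measure_ne_top_of_subset (hball x hx) hΩ) x
    _ = ∫ x in A, ∫ y in Ω, N.indicator g (x, y) ∂μ ∂μ := by
        refine setIntegral_congr_fun hA fun x hx ↦ ?_
        have : (fun y ↦ N.indicator g (x, y)) = (ball x ε).indicator (fun y ↦ f y - f x) := by
          ext y
          simp [N, g, Set.indicator, mem_ball, dist_comm]
        rw [this, setIntegral_indicator measurableSet_ball, Set.inter_eq_right.2 (hball x hx)]
    _ = ∫ p in A ×ˢ Ω, N.indicator g p ∂μ.prod μ :=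
        (setIntegral_prod _ (((integrableOn_prod_sub hf hΩ).mono_set (Set.prod_mono hAΩ le_rfl)).indicator
          (measurableSet_dist_lt ε))).symm
    _ = ∫ p in A ×ˢ Ω ∩ N, g p ∂μ.prod μ := setIntegral_indicator (measurableSet_dist_lt ε)

theorem setIntegral_setAverage_ball_sub_le {Ω A : Set α} {f : α → ℝ} {ε δ c : ℝ}
    (hΩm : MeasurableSet Ω) (hΩ : μ Ω ≠ ∞) (hA : MeasurableSet A) (hAΩ : A ⊆ Ω)
    (hf : IntegrableOn f Ω μ) (hball : ∀ x ∈ A, ball x ε ⊆ Ω)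
    (hc : ∀ x, μ.real (ball x ε) = c) (hc0 : 0 < c) (hδ : 0 ≤ δ)
    (hosc : ∀ x ∈ A, ∀ y ∈ Ω \ A, dist x y < ε → f y - f x ≤ δ) :
    ∫ x in A, ((⨍ y in ball x ε, f y ∂μ) - f x) ∂μ ≤ δ * μ.real (Ω \ A) := by
  set N : Set (α × α) := {p | dist p.1 p.2 < ε}
  have hg := integrableOn_prod_sub hf hΩ
  have hW : MeasurableSet (A ×ˢ (Ω \ A) ∩ N) :=
    (hA.prod (hΩm.diff hA)).inter (measurableSet_dist_lt ε)
  have hWΩ : A ×ˢ (Ω \ A) ∩ N ⊆ Ω ×ˢ Ω := fun p hp ↦ ⟨hAΩ hp.1.1, hp.1.2.1⟩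
  have hAA : A ×ˢ A ∩ N ⊆ Ω ×ˢ Ω := fun p hp ↦ ⟨hAΩ hp.1.1, hAΩ hp.1.2⟩
  have hinner : ∫ p in A ×ˢ A ∩ N, (f p.2 - f p.1) ∂μ.prod μ = 0 :=
    setIntegral_prod_eq_zero_of_antisymm (by ext; simp [N, dist_comm, and_comm])
      fun _ ↦ (neg_sub _ _).symm
  have hcollar_measure : (μ.prod μ).real (A ×ˢ (Ω \ A) ∩ N) ≤ μ.real (Ω \ A) * c := by
    have hball_ne_top : ∀ x, μ (ball x ε) ≠ ∞ := fun x ↦ by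
      rw [← hc x, measureReal_def] at hc0
      exact (ENNReal.toReal_pos_iff.1 hc0).2.ne
    have hle := measure_prod_inter_dist_lt_le (μ := μ) (c := ENNReal.ofReal c)
      (fun y ↦ by rw [← hc y, measureReal_def, ENNReal.ofReal_toReal (hball_ne_top y)]) A
      (hΩm.diff hA)
    have hfin : μ (Ω \ A) * ENNReal.ofReal c ≠ ∞ :=
      ENNReal.mul_ne_top (measure_ne_top_of_subset Set.sdiff_subset hΩ) ENNReal.ofReal_ne_top
    simpa [measureReal_def, ENNReal.toReal_mul, hc0.le] using ENNReal.toReal_mono hfin hle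
  have hcollar : ∫ p in A ×ˢ (Ω \ A) ∩ N, (f p.2 - f p.1) ∂μ.prod μ ≤
      δ * (μ.real (Ω \ A) * c) :=
    calc ∫ p in A ×ˢ (Ω \ A) ∩ N, (f p.2 - f p.1) ∂μ.prod μ
        ≤ ∫ _ in A ×ˢ (Ω \ A) ∩ N, δ ∂μ.prod μ :=
          setIntegral_mono_on (hg.mono_set hWΩ) (integrableOn_const (measure_ne_top_of_subset hWΩ
            (by rw [Measure.prod_prod]; exact ENNReal.mul_ne_top hΩ hΩ))) hW
            fun p hp ↦ hosc p.1 hp.1.1 p.2 hp.1.2 hp.2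
      _ ≤ δ * (μ.real (Ω \ A) * c) := by
          rw [setIntegral_const, smul_eq_mul, mul_comm]
          exact mul_le_mul_of_nonneg_left hcollar_measure hδ
  have hsplit : A ×ˢ Ω ∩ N = (A ×ˢ A ∩ N) ∪ (A ×ˢ (Ω \ A) ∩ N) := by
    rw [← Set.union_inter_distrib_right, ← Set.prod_union, Set.union_sdiff_cancel hAΩ]
  have key : c * ∫ x in A, ((⨍ y in ball x ε, f y ∂μ) - f x) ∂μ ≤ c * (δ * μ.real (Ω \ A)) := by
    rw [mul_setIntegral_setAverage_ball_sub hΩ hA hAΩ hf hball hc, hsplit,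
      setIntegral_union _ hW (hg.mono_set hAA) (hg.mono_set hWΩ), hinner]
    · linarith
    · exact Set.disjoint_left.2 fun p hp hp' ↦ hp'.1.2.2 hp.1.2
  exact le_of_mul_le_mul_left key hc0

end MetricMeasureSpace

section NormedSpace

variable {E : Type*} [NormedAddCommGroup E]

theorem ball_subset_of_lt_infDist_frontier [NormedSpace ℝ E] {Ω : Set E} (hΩ : IsOpen Ω)
    {x : E} {ε : ℝ} (hx : x ∈ Ω) (hε : ε < infDist x (frontier Ω)) : ball x ε ⊆ Ω := by
  rcases le_or_gt ε 0 with hε0 | hε0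
  · simp [ball_eq_empty.2 hε0]
  refine (convex_ball x ε).isPreconnected.subset_of_closure_inter_subset hΩ
    ⟨x, mem_ball_self hε0, hx⟩ fun z ⟨hzc, hz⟩ ↦ ?_
  by_contra hzΩ
  have hzF : z ∈ frontier Ω := by rw [hΩ.frontier_eq]; exact ⟨hzc, hzΩ⟩
  linarith [infDist_le_dist_of_mem hzF (x := x), mem_ball'.1 hz]

theorem abs_sub_le_of_holder_to_compact {Ω K : Set E} (hK : IsCompact K) (hKne : K.Nonempty)
    {u : E → ℝ} {C β ε : ℝ} (hC : 0 ≤ C) (hβ : 0 ≤ β)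
    (hu : ∀ x ∈ Ω, ∀ z ∈ K, |u x - u z| ≤ C * ‖x - z‖ ^ β) {x y : E} (hx : x ∈ Ω) (hy : y ∈ Ω)
    (hyK : infDist y K ≤ ε) (hxy : dist x y ≤ ε) : |u y - u x| ≤ 2 * C * (2 * ε) ^ β := by
  obtain ⟨z, hz, hyz⟩ := hK.exists_infDist_eq_dist hKne y
  have hholder : ∀ w ∈ Ω, dist w z ≤ 2 * ε → |u w - u z| ≤ C * (2 * ε) ^ β := fun w hw hwz ↦
    (hu w hw z hz).trans <| by
      gcongr
      rwa [← dist_eq_norm]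
  have hyz' : dist y z ≤ 2 * ε := by linarith [dist_nonneg (x := x) (y := y)]
  have hxz : dist x z ≤ 2 * ε := by linarith [dist_triangle x y z]
  calc |u y - u x| ≤ |u y - u z| + |u x - u z| := by
        rw [abs_sub_comm (u x)]; exact abs_sub_le _ _ _
    _ ≤ 2 * C * (2 * ε) ^ β := by linarith [hholder y hy hyz', hholder x hx hxz]

end NormedSpace

theorem stmt_8_general
    (m : ℕ) (Ω : Set (EuclideanSpace ℝ (Fin m)))
    (hΩo : IsOpen Ω) (hΩb : Bornology.IsBounded Ω)
    (u : EuclideanSpace ℝ (Fin m) → ℝ) (hu : ContinuousOn u (closure Ω))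
    (hsub : ∀ x ∈ Ω, ∀ t : ℝ, 0 < t → ball x t ⊆ Ω → u x ≤ ⨍ y in ball x t, u y)
    (C₁ β : ℝ) (hC₁ : 0 < C₁) (hβ : β ∈ Set.Ioc (0:ℝ) 1)
    (hbdry : ∀ x ∈ Ω, ∀ y ∈ frontier Ω, |u x - u y| ≤ C₁ * ‖x - y‖ ^ β)
    (C₀ ε₀ : ℝ) (hC₀ : 0 < C₀)
    (hcollar : ∀ ε : ℝ, 0 < ε → ε ≤ ε₀ →
      volume (Ω \ {x ∈ Ω | 2 * ε < infDist x (frontier Ω)}) ≤ ENNReal.ofReal (C₀ * ε)) :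
    ∃ C > 0, ∀ ε : ℝ, 0 < ε → ε ≤ ε₀ →
      (∫ x in {x ∈ Ω | ε < infDist x (frontier Ω)},
          ((⨍ y in ball x ε, u y) - u x)) ≤ C * ε ^ (1 + β) ∧
      (∫ x in {x ∈ Ω | ε < infDist x (frontier Ω)},
          |(⨍ y in ball x ε, u y) - u x|) ≤ C * ε ^ (1 + β) := by
  refine ⟨C₁ * 2 ^ β * C₀, by positivity, fun ε hε hεε₀ ↦ ?_⟩
  set A := {x ∈ Ω | ε < infDist x (frontier Ω)}
  have hA : IsOpen A := hΩo.inter (isOpen_lt continuous_const (continuous_infDist_pt _))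
  have hball : ∀ x ∈ A, ball x ε ⊆ Ω := fun x hx ↦
    ball_subset_of_lt_infDist_frontier hΩo hx.1 hx.2
  have hcollar_half : volume.real (Ω \ A) ≤ C₀ * (ε / 2) := by
    have h := hcollar (ε / 2) (by positivity) (by linarith)
    rw [mul_div_cancel₀ ε two_ne_zero] at h
    exact ENNReal.toReal_le_of_le_ofReal (by positivity) h
  have hosc : ∀ x ∈ A, ∀ y ∈ Ω \ A, dist x y < ε → u y - u x ≤ 2 * C₁ * (2 * ε) ^ β := by
    intro x hx y hy hxy
    have hF : (frontier Ω).Nonempty := by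
      by_contra h
      have hxF := hx.2
      rw [Set.not_nonempty_iff_eq_empty.1 h, infDist_empty] at hxF
      linarith
    refine (le_abs_self _).trans (abs_sub_le_of_holder_to_compact
      (hΩb.isCompact_closure.of_isClosed_subset isClosed_frontier frontier_subset_closure) hF
      hC₁.le hβ.1.le hbdry hx.1 hy.1 (not_lt.1 fun h ↦ hy.2 ⟨hy.1, h⟩) hxy.le)
  have hmain : ∫ x in A, ((⨍ y in ball x ε, u y) - u x) ≤ C₁ * 2 ^ β * C₀ * ε ^ (1 + β) :=
    calc ∫ x in A, ((⨍ y in ball x ε, u y) - u x)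
        ≤ 2 * C₁ * (2 * ε) ^ β * volume.real (Ω \ A) :=
          setIntegral_setAverage_ball_sub_le hΩo.measurableSet hΩb.measure_lt_top.ne
            hA.measurableSet (fun x hx ↦ hx.1)
            ((hu.integrableOn_compact hΩb.isCompact_closure).mono_set subset_closure) hball
            (fun x ↦ Measure.addHaar_real_ball_center volume x ε)
            (ENNReal.toReal_pos (measure_ball_pos volume 0 hε).ne' measure_ball_lt_top.ne)
            (by positivity) hosc
      _ ≤ 2 * C₁ * (2 * ε) ^ β * (C₀ * (ε / 2)) := by gcongr
      _ = C₁ * 2 ^ β * C₀ * ε ^ (1 + β) := by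
          rw [Real.mul_rpow zero_le_two hε.le, Real.rpow_add hε, Real.rpow_one]; ring
  refine ⟨hmain, ?_⟩
  rwa [setIntegral_congr_fun hA.measurableSet fun x hx ↦
    abs_of_nonneg (sub_nonneg.2 (hsub x hx.1 ε hε (hball x hx)))]

/-- `L¹` estimate for the ball-average regularization: if `u` satisfies the
sub-mean value property, is Hölder of exponent `β` against boundary points, and the collar
`Ω \ Ω_{2ε}` has measure `≤ C₀ ε`, then
`∫_{Ω_ε} (û_ε - u) dμ ≤ C ε^{1+β}`, and in particular `‖û_ε - u‖_{L¹(Ω_ε)} ≤ C ε^{1+β}`. -/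
theorem stmt_8
    (m : ℕ) (Ω : Set (EuclideanSpace ℝ (Fin m)))
    (hΩo : IsOpen Ω) (hΩb : Bornology.IsBounded Ω) (hΩc : IsConnected Ω)
    (u : EuclideanSpace ℝ (Fin m) → ℝ) (hu : ContinuousOn u (closure Ω))
    (hsub : ∀ x ∈ Ω, ∀ t : ℝ, 0 < t → ball x t ⊆ Ω → u x ≤ ⨍ y in ball x t, u y)
    (C₁ β : ℝ) (hC₁ : 0 < C₁) (hβ : β ∈ Set.Ioc (0:ℝ) 1)
    (hbdry : ∀ x ∈ Ω, ∀ y ∈ frontier Ω, |u x - u y| ≤ C₁ * ‖x - y‖ ^ β)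
    (C₀ ε₀ : ℝ) (hC₀ : 0 < C₀) (hε₀ : 0 < ε₀)
    (hcollar : ∀ ε : ℝ, 0 < ε → ε ≤ ε₀ →
      volume (Ω \ {x ∈ Ω | 2 * ε < infDist x (frontier Ω)}) ≤ ENNReal.ofReal (C₀ * ε)) :
    ∃ C > 0, ∀ ε : ℝ, 0 < ε → ε ≤ ε₀ →
      (∫ x in {x ∈ Ω | ε < infDist x (frontier Ω)},
          ((⨍ y in ball x ε, u y) - u x)) ≤ C * ε ^ (1 + β) ∧
      (∫ x in {x ∈ Ω | ε < infDist x (frontier Ω)},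
          |(⨍ y in ball x ε, u y) - u x|) ≤ C * ε ^ (1 + β) :=
  stmt_8_general m Ω hΩo hΩb u hu hsub C₁ β hC₁ hβ hbdry C₀ ε₀ hC₀ hcollar
end
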